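/- arXiv:math/9909016 — 12 statements merged into one kernel-verified Lean document; each statement's English description precedes it below -/
import Mathlib

section
/- Let m ≥ 1 and let μ_k^{(1)}, μ_k^{(2)}, α_k, α̃_k ∈ ℂ for k = 1,…,m. For each k set M_k = [[μ_k^{(1)}, α_k],[0, μ_k^{(2)}]] and M̃_k = [[μ_k^{(1)}, α̃_k],[0, μ_k^{(2)}]] (upper triangular 2×2 complex matrices with the same diagonal entries but possibly different upper-right entries). Then the m-tuples [M_1,…,M_m] and [M̃_1,…,M̃_m] are equivalent if and only if there exist λ ∈ ℂ \ {0} and ρ ∈ ℂ such that α_k = λ·α̃_k + ρ·(μ_k^{(1)} − μ_k^{(2)}) for every k = 1,…,m. -/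
/-!
`M' = C⁻¹ M C` is the linear condition `C M' = M C`, which for `C = [[p, q], [r, s]]` and the
triangular pair reads off entrywise. If `r = 0`, the upper-right entry gives
`α s = p α' - q (μ₁ - μ₂)` with `p s ≠ 0`; if `r ≠ 0`, all `α` and `α'` vanish. Conversely,
`C = [[λ, -ρ], [0, 1]]` conjugates one tuple into the other.
-/

theorem Matrix.eq_inv_mul_mul_iff_mul_eq {n R : Type*} [Fintype n] [DecidableEq n] [CommRing R]
    {C : Matrix n n R} (hC : IsUnit C) (A B : Matrix n n R) :
    B = C⁻¹ * A * C ↔ C * B = A * C := by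
  obtain ⟨u, rfl⟩ := hC
  rw [← Matrix.coe_units_inv, Matrix.mul_assoc, Units.eq_inv_mul_iff_mul_eq]

theorem fin_two_mul_upperTriangular_eq_iff {R : Type*} [CommRing R] (p q r s x y a a' : R) :
    !![p, q; r, s] * !![x, a'; 0, y] = !![x, a; 0, y] * !![p, q; r, s] ↔
      a * r = 0 ∧ a * s = p * a' - q * (x - y) ∧ r * (x - y) = 0 ∧ r * a' = 0 := by
  simp only [Matrix.mul_fin_two, ← Matrix.ext_iff, Fin.forall_fin_two, Matrix.of_apply,
    Matrix.cons_val_zero, Matrix.cons_val_one, Matrix.cons_val_fin_one]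
  constructor
  · rintro ⟨⟨h00, h01⟩, h10, h11⟩
    exact ⟨by linear_combination -h00, by linear_combination -h01, by linear_combination h10,
      by linear_combination h11⟩
  · rintro ⟨h00, h01, h10, h11⟩
    exact ⟨⟨by linear_combination -h00, by linear_combination -h01⟩, by linear_combination h10,
      by linear_combination h11⟩

theorem exists_scale_shift_of_fin_two_mul_eq {K ι : Type*} [Field K] (μ₁ μ₂ α α' : ι → K)
    {p q r s : K} (hdet : p * s - q * r ≠ 0)
    (h : ∀ k, !![p, q; r, s] * !![μ₁ k, α' k; 0, μ₂ k] = !![μ₁ k, α k; 0, μ₂ k] * !![p, q; r, s]) :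
    ∃ lam : K, lam ≠ 0 ∧ ∃ ρ : K, ∀ k, α k = lam * α' k + ρ * (μ₁ k - μ₂ k) := by
  simp only [fin_two_mul_upperTriangular_eq_iff] at h
  by_cases hr : r = 0
  · obtain ⟨hp, hs⟩ : p ≠ 0 ∧ s ≠ 0 := by simpa [hr] using hdet
    refine ⟨p / s, div_ne_zero hp hs, -q / s, fun k => ?_⟩
    field_simp
    linear_combination (h k).2.1
  · refine ⟨1, one_ne_zero, 0, fun k => ?_⟩
    rw [(mul_eq_zero.1 (h k).1).resolve_right hr, (mul_eq_zero.1 (h k).2.2.2).resolve_left hr]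
    ring

theorem stmt0_general (m : ℕ)
    (μ₁ μ₂ α α' : Fin m → ℂ)
    (M M' : Fin m → Matrix (Fin 2) (Fin 2) ℂ)
    (hM : ∀ k, M k = !![μ₁ k, α k; 0, μ₂ k])
    (hM' : ∀ k, M' k = !![μ₁ k, α' k; 0, μ₂ k]) :
    (∃ C : Matrix (Fin 2) (Fin 2) ℂ, IsUnit C ∧ ∀ k, M' k = C⁻¹ * M k * C) ↔
      ∃ lam : ℂ, lam ≠ 0 ∧ ∃ ρ : ℂ, ∀ k, α k = lam * α' k + ρ * (μ₁ k - μ₂ k) := by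
  simp only [hM, hM']
  constructor
  · rintro ⟨C, hC, h⟩
    have hdet : C 0 0 * C 1 1 - C 0 1 * C 1 0 ≠ 0 := by
      rw [← Matrix.det_fin_two, ← isUnit_iff_ne_zero, ← Matrix.isUnit_iff_isUnit_det]
      exact hC
    have hcomm := fun k => (Matrix.eq_inv_mul_mul_iff_mul_eq hC _ _).1 (h k)
    rw [Matrix.eta_fin_two C] at hcomm
    exact exists_scale_shift_of_fin_two_mul_eq μ₁ μ₂ α α' hdet hcomm
  · rintro ⟨lam, hlam, ρ, h⟩
    have hC : IsUnit !![lam, -ρ; 0, 1] := by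
      simpa [Matrix.isUnit_iff_isUnit_det, Matrix.det_fin_two_of] using hlam
    refine ⟨_, hC, fun k => (Matrix.eq_inv_mul_mul_iff_mul_eq hC _ _).2 ?_⟩
    rw [fin_two_mul_upperTriangular_eq_iff]
    exact ⟨mul_zero _, by rw [h k]; ring, zero_mul _, zero_mul _⟩

/-- Two `m`-tuples of upper triangular `2×2` matrices with the
same diagonals are simultaneously similar iff the upper-right entries are related
by `α_k = λ·α̃_k + ρ·(μ_k^{(1)} − μ_k^{(2)})`. -/
theorem stmt0 (m : ℕ) (hm : 1 ≤ m)
    (μ₁ μ₂ α α' : Fin m → ℂ)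
    (M M' : Fin m → Matrix (Fin 2) (Fin 2) ℂ)
    (hM : ∀ k, M k = !![μ₁ k, α k; 0, μ₂ k])
    (hM' : ∀ k, M' k = !![μ₁ k, α' k; 0, μ₂ k]) :
    (∃ C : Matrix (Fin 2) (Fin 2) ℂ, IsUnit C ∧ ∀ k, M' k = C⁻¹ * M k * C) ↔
      ∃ lam : ℂ, lam ≠ 0 ∧ ∃ ρ : ℂ, ∀ k, α k = lam * α' k + ρ * (μ₁ k - μ₂ k) :=
  stmt0_general m μ₁ μ₂ α α' M M' hM hM'
end

section
/- Let m ≥ 1 and let μ_k^{(1)}, μ_k^{(2)}, α_k ∈ ℂ for k = 1,…,m, and set M_k = [[μ_k^{(1)}, α_k],[0, μ_k^{(2)}]]. Then the matrices M_1,…,M_m are simultaneously diagonalizable (i.e., there exists a single invertible 2×2 complex matrix C such that C^{-1} M_k C is diagonal for every k) if and only if the vector (α_1,…,α_m) ∈ ℂ^m is a scalar multiple of the vector (μ_1^{(1)} − μ_1^{(2)},…,μ_m^{(1)} − μ_m^{(2)}). -/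
/-! If `C⁻¹ M_k C` is diagonal for all `k`, the columns of `C` are common eigenvectors of the
`M_k`, and one of them, `(x, y)`, has `y ≠ 0` because `C` is invertible. For an upper
triangular matrix the eigenvalue of such a vector is `μ^{(2)}`, and the first row of the
eigenvalue equation reads `α = -(x / y) (μ^{(1)} - μ^{(2)})`. Conversely, when
`α_k = c (μ_k^{(1)} - μ_k^{(2)})` the shear `[[1, -c], [0, 1]]` diagonalizes every `M_k`. -/

namespace Matrix

variable {n R : Type*} [Fintype n] [DecidableEq n] [CommRing R]

theorem exists_ne_zero_of_isUnit [Nontrivial R] {C : Matrix n n R} (hC : IsUnit C) (i : n) :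
    ∃ j, C i j ≠ 0 := by
  by_contra! h
  exact ((isUnit_iff_isUnit_det C).mp hC).ne_zero (det_eq_zero_of_row_eq_zero i h)

theorem mulVec_col_eq_smul_of_isDiag_inv_mul_mul {C M : Matrix n n R} (hC : IsUnit C)
    (hD : (C⁻¹ * M * C).IsDiag) (j : n) : M *ᵥ Cᵀ j = (C⁻¹ * M * C) j j • Cᵀ j := by
  have hMC : M * C = C * diagonal (C⁻¹ * M * C).diag := by
    rw [hD.diagonal_diag, ← Matrix.mul_assoc, ← Matrix.mul_assoc,
      mul_nonsing_inv _ ((isUnit_iff_isUnit_det C).mp hC), Matrix.one_mul]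
  ext i
  have hij := congrFun (congrFun hMC i) j
  rw [mul_diagonal, diag_apply, mul_apply] at hij
  simpa only [mulVec, dotProduct, transpose_apply, Pi.smul_apply, smul_eq_mul, mul_comm _ (C i j)]
    using hij

theorem upperTriangular_fin_two_eq_of_mulVec_eq_smul {K : Type*} [Field K] {a b d e : K}
    {v : Fin 2 → K} (hv : !![a, b; 0, d] *ᵥ v = e • v) (hv₁ : v 1 ≠ 0) :
    b = -(v 0 / v 1) * (a - d) := by
  have row₀ := congrFun hv 0
  have row₁ := congrFun hv 1
  simp only [mulVec, dotProduct, Fin.sum_univ_two, of_apply, cons_val', cons_val_zero,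
    cons_val_one, empty_val', cons_val_fin_one, Pi.smul_apply, smul_eq_mul,
    zero_mul, zero_add] at row₀ row₁
  have he : e = d := mul_right_cancel₀ hv₁ row₁.symm
  subst he
  field_simp
  linear_combination row₀

theorem isDiag_shear_conj (a d c : R) :
    ((!![1, -c; 0, 1])⁻¹ * !![a, c * (a - d); 0, d] * !![1, -c; 0, 1]).IsDiag := by
  have hinv : (!![1, -c; 0, 1] : Matrix (Fin 2) (Fin 2) R)⁻¹ = !![1, c; 0, 1] := by
    rw [inv_def]
    simp [det_fin_two_of, adjugate_fin_two_of]
  have hconj :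
      !![1, c; 0, 1] * !![a, c * (a - d); 0, d] * !![1, -c; 0, 1] = diagonal ![a, d] := by
    simp [diagonal_fin_two]
    ring
  rw [hinv, hconj]
  exact isDiag_diagonal _

end Matrix

theorem stmt1_general (m : ℕ) (μ₁ μ₂ α : Fin m → ℂ)
    (M : Fin m → Matrix (Fin 2) (Fin 2) ℂ)
    (hM : ∀ k, M k = !![μ₁ k, α k; 0, μ₂ k]) :
    (∃ C : Matrix (Fin 2) (Fin 2) ℂ, IsUnit C ∧ ∀ k, (C⁻¹ * M k * C).IsDiag) ↔
      ∃ c : ℂ, ∀ k, α k = c * (μ₁ k - μ₂ k) := by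
  constructor
  · rintro ⟨C, hC, hdiag⟩
    obtain ⟨j, hj⟩ := Matrix.exists_ne_zero_of_isUnit hC 1
    refine ⟨-(C 0 j / C 1 j), fun k => ?_⟩
    have hcol := Matrix.mulVec_col_eq_smul_of_isDiag_inv_mul_mul hC (hdiag k) j
    rw [hM k] at hcol
    exact Matrix.upperTriangular_fin_two_eq_of_mulVec_eq_smul hcol hj
  · rintro ⟨c, hc⟩
    refine ⟨!![1, -c; 0, 1], ?_, fun k => ?_⟩
    · simp [Matrix.isUnit_iff_isUnit_det, Matrix.det_fin_two_of]
    · rw [hM k, hc k]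
      exact Matrix.isDiag_shear_conj _ _ c

/-- Upper triangular `2×2` matrices `M_k` are simultaneously
diagonalizable iff `(α_1,…,α_m)` is a scalar multiple of
`(μ_1^{(1)}−μ_1^{(2)},…,μ_m^{(1)}−μ_m^{(2)})`. -/
theorem stmt1 (m : ℕ) (hm : 1 ≤ m) (μ₁ μ₂ α : Fin m → ℂ)
    (M : Fin m → Matrix (Fin 2) (Fin 2) ℂ)
    (hM : ∀ k, M k = !![μ₁ k, α k; 0, μ₂ k]) :
    (∃ C : Matrix (Fin 2) (Fin 2) ℂ, IsUnit C ∧ ∀ k, (C⁻¹ * M k * C).IsDiag) ↔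
      ∃ c : ℂ, ∀ k, α k = c * (μ₁ k - μ₂ k) :=
  stmt1_general m μ₁ μ₂ α M hM
end

section
/- For k = 1,2,3 let M_k be the upper triangular 3×3 complex matrix with diagonal entries μ_k^{(1)}, μ_k^{(2)}, μ_k^{(3)}, (1,2)-entry α_k, (2,3)-entry β_k and (1,3)-entry γ_k, and assume M_1 M_2 M_3 = I. Assume further that the only subspaces of ℂ^3 different from {0} and ℂ^3 that are invariant under all of M_1, M_2, M_3 are span{e_1} and span{e_1, e_2} (where e_1, e_2 are the first two standard basis vectors). For k = 1,2,3 let M̃_k be the upper triangular matrix with the same entries as M_k except that γ_k is replaced by γ̃_k ∈ ℂ. Then the triples [M_1, M_2, M_3] and [M̃_1, M̃_2, M̃_3] are equivalent if and only if there exist α, β, γ ∈ ℂ such that for every k = 1,2,3: α·(μ_k^{(1)} − μ_k^{(2)}) = 0, β·(μ_k^{(2)} − μ_k^{(3)}) = 0, and γ̃_k = γ_k + γ·(μ_k^{(1)} − μ_k^{(3)}) − α·β_k + β·α_k. -/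
/-!
If `C⁻¹ M_k C = M̃_k`, then `C` carries common invariant subspaces of the `M̃_k` to common
invariant subspaces of the `M_k` of the same dimension. The `M̃_k` preserve the standard flag
`span{e₁} ⊂ span{e₁, e₂}`, which is the only invariant line and plane of the `M_k`, so `C` is
upper triangular. If two consecutive diagonal entries of `C` differed, the entries of
`C M̃_k = M_k C` would produce a further invariant subspace: a common eigenvector `(t, 1, 0)`,
or an invariant plane `span{e₁, (0, s, 1)}`. So `C` has scalar diagonal, and its remaining
entries give `α, β, γ`. Conversely, `[[1, α, γ], [0, 1, β], [0, 0, 1]]` conjugates one triple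
into the other.
-/

open Matrix Module Submodule

def IsCommonInvariant {ι n R : Type*} [Fintype n] [CommRing R]
    (M : ι → Matrix n n R) (X : Submodule R (n → R)) : Prop :=
  ∀ k, ∀ v ∈ X, M k *ᵥ v ∈ X

namespace IsCommonInvariant

variable {ι n R : Type*} [Fintype n] [CommRing R] {M : ι → Matrix n n R}

theorem span_singleton {v : n → R} (c : ι → R) (hv : ∀ k, M k *ᵥ v = c k • v) :
    IsCommonInvariant M (span R {v}) := by
  intro k x hx
  obtain ⟨r, rfl⟩ := mem_span_singleton.1 hx
  rw [mulVec_smul, hv, smul_smul]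
  exact smul_mem _ _ (mem_span_singleton_self v)

theorem span_pair {u w : n → R} (c d e : ι → R) (hu : ∀ k, M k *ᵥ u = c k • u)
    (hw : ∀ k, M k *ᵥ w = d k • u + e k • w) : IsCommonInvariant M (span R {u, w}) := by
  intro k x hx
  obtain ⟨r, s, rfl⟩ := mem_span_pair.1 hx
  refine mem_span_pair.2 ⟨r * c k + s * d k, s * e k, ?_⟩
  rw [mulVec_add, mulVec_smul, mulVec_smul, hu, hw]
  module

theorem map_toLin' [DecidableEq n] {M' : ι → Matrix n n R} {X : Submodule R (n → R)}
    (hX : IsCommonInvariant M' X) {C : Matrix n n R} (hC : ∀ k, C * M' k = M k * C) :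
    IsCommonInvariant M (X.map (toLin' C)) := by
  rintro k _ ⟨x, hx, rfl⟩
  refine ⟨M' k *ᵥ x, hX k x hx, ?_⟩
  simp only [toLin'_apply, mulVec_mulVec, hC]

end IsCommonInvariant

theorem Matrix.eq_inv_mul_mul_iff {n R : Type*} [Fintype n] [DecidableEq n] [CommRing R]
    {C : Matrix n n R} (hC : IsUnit C) (M M' : Matrix n n R) :
    M' = C⁻¹ * M * C ↔ C * M' = M * C := by
  have := hC.invertible
  rw [Matrix.mul_assoc, eq_comm, inv_mul_eq_iff_eq_mul_of_invertible, eq_comm]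

section Flag

variable {K V : Type*} [Field K] [AddCommGroup V] [Module K V]

theorem finrank_span_pair {u w : V} (h : LinearIndependent K ![u, w]) :
    finrank K (span K {u, w}) = 2 := by
  have := finrank_span_eq_card h
  rwa [range_cons_cons_empty, Fintype.card_fin] at this

variable {X L₁ L₂ : Submodule K V}

theorem eq_line_of_finrank_eq_one (hV : finrank K V = 3)
    (hX : X = ⊥ ∨ X = ⊤ ∨ X = L₁ ∨ X = L₂) (hL₂ : finrank K L₂ = 2) (h : finrank K X = 1) :
    X = L₁ := by
  rcases hX with rfl | rfl | rfl | rfl <;> simp_all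

theorem eq_plane_of_finrank_eq_two (hV : finrank K V = 3)
    (hX : X = ⊥ ∨ X = ⊤ ∨ X = L₁ ∨ X = L₂) (hL₁ : finrank K L₁ = 1) (h : finrank K X = 2) :
    X = L₂ := by
  rcases hX with rfl | rfl | rfl | rfl <;> simp_all

end Flag

section StandardFlag

variable {K : Type*} [Field K]

theorem finrank_span_single_zero : finrank K (span K {(Pi.single 0 1 : Fin 3 → K)}) = 1 :=
  finrank_span_singleton (by simp)

theorem finrank_span_single_zero_one :
    finrank K (span K {(Pi.single 0 1 : Fin 3 → K), Pi.single 1 1}) = 2 := by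
  refine finrank_span_pair (LinearIndependent.pair_iff.2 fun s t h => ?_)
  exact ⟨by simpa using congrFun h 0, by simpa using congrFun h 1⟩

theorem apply_eq_zero_of_mem_span_single_zero {x : Fin 3 → K}
    (hx : x ∈ span K {(Pi.single 0 1 : Fin 3 → K)}) : x 1 = 0 ∧ x 2 = 0 := by
  obtain ⟨r, rfl⟩ := mem_span_singleton.1 hx
  simp

theorem apply_two_eq_zero_of_mem_span_single_zero_one {x : Fin 3 → K}
    (hx : x ∈ span K {(Pi.single 0 1 : Fin 3 → K), Pi.single 1 1}) : x 2 = 0 := by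
  obtain ⟨r, s, rfl⟩ := mem_span_pair.1 hx
  simp

end StandardFlag

section UpperTriangular

variable {R : Type*} [CommRing R]

theorem upperTriangular_mulVec_single_zero (p q r x y z : R) :
    !![p, x, z; 0, q, y; 0, 0, r] *ᵥ Pi.single 0 1 = p • Pi.single 0 1 := by
  ext i; fin_cases i <;> simp

theorem upperTriangular_mulVec_single_one (p q r x y z : R) :
    !![p, x, z; 0, q, y; 0, 0, r] *ᵥ Pi.single 1 1 = x • Pi.single 0 1 + q • Pi.single 1 1 := by
  ext i; fin_cases i <;> simp

theorem upperTriangular_mul_comm_iff (c₀₀ c₀₁ c₀₂ c₁₁ c₁₂ c₂₂ p q r x y z z' : R) :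
    !![c₀₀, c₀₁, c₀₂; 0, c₁₁, c₁₂; 0, 0, c₂₂] * !![p, x, z'; 0, q, y; 0, 0, r] =
        !![p, x, z; 0, q, y; 0, 0, r] * !![c₀₀, c₀₁, c₀₂; 0, c₁₁, c₁₂; 0, 0, c₂₂] ↔
      (c₀₀ - c₁₁) * x = c₀₁ * (p - q) ∧ (c₁₁ - c₂₂) * y = c₁₂ * (q - r) ∧
        c₀₀ * z' + c₀₁ * y + c₀₂ * r = p * c₀₂ + x * c₁₂ + z * c₂₂ := by
  simp only [cons_mul, vecMul_cons, empty_vecMul, empty_mul, head_cons, tail_cons, smul_cons,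
    smul_eq_mul, smul_empty, zero_smul, mul_zero, add_zero, zero_add, add_cons, empty_add_empty,
    EmbeddingLike.apply_eq_iff_eq, vecCons_inj, and_true, true_and]
  constructor
  · rintro ⟨⟨-, h₀₁, h₀₂⟩, ⟨-, h₁₂⟩, -⟩
    exact ⟨by linear_combination h₀₁, by linear_combination h₁₂, by linear_combination h₀₂⟩
  · rintro ⟨h₀₁, h₁₂, h₀₂⟩
    exact ⟨⟨mul_comm _ _, by linear_combination h₀₁, by linear_combination h₀₂⟩,
      ⟨mul_comm _ _, by linear_combination h₁₂⟩, mul_comm _ _⟩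

end UpperTriangular

section Triangular

variable {ι K : Type*} [Field K] {μ₁ μ₂ μ₃ a b g : ι → K} {M : ι → Matrix (Fin 3) (Fin 3) K}

theorem isCommonInvariant_span_single_zero
    (hM : ∀ k, M k = !![μ₁ k, a k, g k; 0, μ₂ k, b k; 0, 0, μ₃ k]) :
    IsCommonInvariant M (span K {Pi.single 0 1}) :=
  .span_singleton μ₁ fun k => by rw [hM, upperTriangular_mulVec_single_zero]

theorem isCommonInvariant_span_single_zero_one
    (hM : ∀ k, M k = !![μ₁ k, a k, g k; 0, μ₂ k, b k; 0, 0, μ₃ k]) :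
    IsCommonInvariant M (span K {Pi.single 0 1, Pi.single 1 1}) :=
  .span_pair μ₁ a μ₂ (fun k => by rw [hM, upperTriangular_mulVec_single_zero])
    fun k => by rw [hM, upperTriangular_mulVec_single_one]

variable (hM : ∀ k, M k = !![μ₁ k, a k, g k; 0, μ₂ k, b k; 0, 0, μ₃ k])
  (honly : ∀ X, IsCommonInvariant M X →
    X = ⊥ ∨ X = ⊤ ∨ X = span K {Pi.single 0 1} ∨ X = span K {Pi.single 0 1, Pi.single 1 1})

include hM honly in
theorem not_exists_split_zero_one : ¬ ∃ t, ∀ k, a k = t * (μ₂ k - μ₁ k) := by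
  rintro ⟨t, ht⟩
  have hv : ∀ k, M k *ᵥ ![t, 1, 0] = μ₂ k • ![t, 1, 0] := by
    intro k
    rw [hM, ht]
    ext i; fin_cases i <;> simp; ring
  have hline := eq_line_of_finrank_eq_one (finrank_fin_fun K) (honly _ (.span_singleton μ₂ hv))
    finrank_span_single_zero_one (finrank_span_singleton (by simp))
  have := (apply_eq_zero_of_mem_span_single_zero (hline ▸ mem_span_singleton_self _)).1
  simp at this

include hM honly in
theorem not_exists_split_one_two : ¬ ∃ s, ∀ k, b k = s * (μ₃ k - μ₂ k) := by
  rintro ⟨s, hs⟩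
  have hv : ∀ k, M k *ᵥ ![0, s, 1] = (a k * s + g k) • Pi.single 0 1 + μ₃ k • ![0, s, 1] := by
    intro k
    rw [hM, hs]
    ext i; fin_cases i <;> simp <;> ring
  have hind : LinearIndependent K ![Pi.single 0 1, ![0, s, 1]] :=
    LinearIndependent.pair_iff.2 fun c d h => by
      have h₂ : d = 0 := by simpa using congrFun h 2
      exact ⟨by simpa [h₂] using congrFun h 0, h₂⟩
  have hplane := eq_plane_of_finrank_eq_two (finrank_fin_fun K)
    (honly _ (.span_pair μ₁ _ μ₃ (fun k => by rw [hM, upperTriangular_mulVec_single_zero]) hv))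
    finrank_span_single_zero (finrank_span_pair hind)
  have := apply_two_eq_zero_of_mem_span_single_zero_one
    (hplane ▸ subset_span (by simp) : ![0, s, 1] ∈ _)
  simp at this

include hM honly in
theorem eq_of_forall_sub_mul_eq_zero_one {x y z : K}
    (h : ∀ k, (x - y) * a k = z * (μ₁ k - μ₂ k)) : x = y := by
  by_contra hne
  refine not_exists_split_zero_one hM honly ⟨z / (y - x), fun k => ?_⟩
  field_simp [sub_ne_zero.2 (Ne.symm hne)]
  linear_combination -h k

include hM honly in
theorem eq_of_forall_sub_mul_eq_one_two {x y z : K}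
    (h : ∀ k, (x - y) * b k = z * (μ₂ k - μ₃ k)) : x = y := by
  by_contra hne
  refine not_exists_split_one_two hM honly ⟨z / (y - x), fun k => ?_⟩
  field_simp [sub_ne_zero.2 (Ne.symm hne)]
  linear_combination -h k

end Triangular

theorem eq_upperTriangular_of_mul_eq_mul {ι K : Type*} [Field K]
    {M M' : ι → Matrix (Fin 3) (Fin 3) K}
    (hline : IsCommonInvariant M' (span K {Pi.single 0 1}))
    (hplane : IsCommonInvariant M' (span K {Pi.single 0 1, Pi.single 1 1}))
    (honly : ∀ X, IsCommonInvariant M X →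
      X = ⊥ ∨ X = ⊤ ∨ X = span K {Pi.single 0 1} ∨ X = span K {Pi.single 0 1, Pi.single 1 1})
    {C : Matrix (Fin 3) (Fin 3) K} (hC : IsUnit C) (hcomm : ∀ k, C * M' k = M k * C) :
    C = !![C 0 0, C 0 1, C 0 2; 0, C 1 1, C 1 2; 0, 0, C 2 2] := by
  have hinj : Function.Injective (toLin' C) := mulVec_injective_iff_isUnit.2 hC
  have hline' := eq_line_of_finrank_eq_one (finrank_fin_fun K) (honly _ (hline.map_toLin' hcomm))
    finrank_span_single_zero_one
    ((equivMapOfInjective _ hinj _).finrank_eq.symm.trans finrank_span_single_zero)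
  have hplane' := eq_plane_of_finrank_eq_two (finrank_fin_fun K)
    (honly _ (hplane.map_toLin' hcomm)) finrank_span_single_zero
    ((equivMapOfInjective _ hinj _).finrank_eq.symm.trans finrank_span_single_zero_one)
  obtain ⟨h₁₀, h₂₀⟩ := apply_eq_zero_of_mem_span_single_zero
    (hline' ▸ mem_map_of_mem (mem_span_singleton_self _) : C *ᵥ Pi.single 0 1 ∈ _)
  have h₂₁ := apply_two_eq_zero_of_mem_span_single_zero_one
    (hplane' ▸ mem_map_of_mem (subset_span (by simp)) : C *ᵥ Pi.single 1 1 ∈ _)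
  simp only [mulVec_single_one, col_apply] at h₁₀ h₂₀ h₂₁
  have := eta_fin_three C
  rwa [h₁₀, h₂₀, h₂₁] at this

theorem stmt3_general (μ₁ μ₂ μ₃ a b g g' : Fin 3 → ℂ)
    (M M' : Fin 3 → Matrix (Fin 3) (Fin 3) ℂ)
    (hM : ∀ k, M k = !![μ₁ k, a k, g k; 0, μ₂ k, b k; 0, 0, μ₃ k])
    (hM' : ∀ k, M' k = !![μ₁ k, a k, g' k; 0, μ₂ k, b k; 0, 0, μ₃ k])
    (L₁ L₂ : Submodule ℂ (Fin 3 → ℂ))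
    (hL₁ : L₁ = Submodule.span ℂ {Pi.single (0 : Fin 3) (1 : ℂ)})
    (hL₂ : L₂ = Submodule.span ℂ {Pi.single (0 : Fin 3) (1 : ℂ), Pi.single (1 : Fin 3) (1 : ℂ)})
    (honly : ∀ X : Submodule ℂ (Fin 3 → ℂ),
      (∀ k, ∀ v ∈ X, (M k).mulVec v ∈ X) → X = ⊥ ∨ X = ⊤ ∨ X = L₁ ∨ X = L₂) :
    (∃ C : Matrix (Fin 3) (Fin 3) ℂ, IsUnit C ∧ ∀ k, M' k = C⁻¹ * M k * C) ↔
      ∃ al be ga : ℂ, ∀ k,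
        al * (μ₁ k - μ₂ k) = 0 ∧ be * (μ₂ k - μ₃ k) = 0 ∧
          g' k = g k + ga * (μ₁ k - μ₃ k) - al * b k + be * a k := by
  subst hL₁ hL₂
  constructor
  · rintro ⟨C, hC, hconj⟩
    have hcomm k : C * M' k = M k * C := (eq_inv_mul_mul_iff hC _ _).1 (hconj k)
    have hCtri := eq_upperTriangular_of_mul_eq_mul (isCommonInvariant_span_single_zero hM')
      (isCommonInvariant_span_single_zero_one hM') honly hC hcomm
    have hrel k := by
      have h := hcomm k
      rw [hCtri, hM, hM'] at h
      exact (upperTriangular_mul_comm_iff ..).1 h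
    have h₀₁ := eq_of_forall_sub_mul_eq_zero_one hM honly fun k => (hrel k).1
    have h₁₂ := eq_of_forall_sub_mul_eq_one_two hM honly fun k => (hrel k).2.1
    rw [← h₁₂, ← h₀₁] at hCtri hrel
    have h₀₀ : C 0 0 ≠ 0 := by
      have hdet := (isUnit_iff_isUnit_det C).1 hC
      rw [hCtri, det_fin_three] at hdet
      simpa using hdet
    simp only [sub_self, zero_mul] at hrel
    refine ⟨C 0 1 / C 0 0, C 1 2 / C 0 0, C 0 2 / C 0 0, fun k => ⟨?_, ?_, ?_⟩⟩ <;> field_simp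
    · linear_combination -(hrel k).1
    · linear_combination -(hrel k).2.1
    · linear_combination (hrel k).2.2
  · rintro ⟨al, be, ga, h⟩
    have hC : IsUnit !![1, al, ga; 0, 1, be; 0, 0, 1] := by
      simp [isUnit_iff_isUnit_det, det_fin_three]
    refine ⟨_, hC, fun k => (eq_inv_mul_mul_iff hC _ _).2 ?_⟩
    obtain ⟨h₁, h₂, h₃⟩ := h k
    rw [hM, hM', upperTriangular_mul_comm_iff]
    exact ⟨by linear_combination -h₁, by linear_combination -h₂, by linear_combination h₃⟩

/-- (Proposition 7.1 of the paper.) For triples of upper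
triangular `3×3` matrices with product `I` whose only non-trivial common
invariant subspaces are `span{e₁}` and `span{e₁,e₂}`, changing only the
`(1,3)`-entries `γ_k ↦ γ̃_k` yields an equivalent triple iff there exist
`α, β, γ ∈ ℂ` with `α(μ_k^{(1)}−μ_k^{(2)}) = 0`, `β(μ_k^{(2)}−μ_k^{(3)}) = 0`
and `γ̃_k = γ_k + γ(μ_k^{(1)}−μ_k^{(3)}) − α β_k + β α_k` for all `k`. -/
theorem stmt3 (μ₁ μ₂ μ₃ a b g g' : Fin 3 → ℂ)
    (M M' : Fin 3 → Matrix (Fin 3) (Fin 3) ℂ)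
    (hM : ∀ k, M k = !![μ₁ k, a k, g k; 0, μ₂ k, b k; 0, 0, μ₃ k])
    (hM' : ∀ k, M' k = !![μ₁ k, a k, g' k; 0, μ₂ k, b k; 0, 0, μ₃ k])
    (hprod : M 0 * M 1 * M 2 = 1)
    (L₁ L₂ : Submodule ℂ (Fin 3 → ℂ))
    (hL₁ : L₁ = Submodule.span ℂ {Pi.single (0 : Fin 3) (1 : ℂ)})
    (hL₂ : L₂ = Submodule.span ℂ {Pi.single (0 : Fin 3) (1 : ℂ), Pi.single (1 : Fin 3) (1 : ℂ)})
    (hinv₁ : ∀ k, ∀ v ∈ L₁, (M k).mulVec v ∈ L₁)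
    (hinv₂ : ∀ k, ∀ v ∈ L₂, (M k).mulVec v ∈ L₂)
    (honly : ∀ X : Submodule ℂ (Fin 3 → ℂ),
      (∀ k, ∀ v ∈ X, (M k).mulVec v ∈ X) → X = ⊥ ∨ X = ⊤ ∨ X = L₁ ∨ X = L₂) :
    (∃ C : Matrix (Fin 3) (Fin 3) ℂ, IsUnit C ∧ ∀ k, M' k = C⁻¹ * M k * C) ↔
      ∃ al be ga : ℂ, ∀ k,
        al * (μ₁ k - μ₂ k) = 0 ∧ be * (μ₂ k - μ₃ k) = 0 ∧
          g' k = g k + ga * (μ₁ k - μ₃ k) - al * b k + be * a k :=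
  stmt3_general μ₁ μ₂ μ₃ a b g g' M M' hM hM' L₁ L₂ hL₁ hL₂ honly
end

section
/- For k = 1,2,3 let μ_k ∈ ℂ, let α_k, α̃_k ∈ ℂ^{1×2} be row vectors, let M_k^{#} be 2×2 complex matrices, and define the 3×3 complex matrices M_k = [[μ_k, α_k],[0, M_k^{#}]] and M̃_k = [[μ_k, α̃_k],[0, M_k^{#}]] (block upper triangular with (1,1)-block μ_k, (1,2)-block α_k resp. α̃_k, and (2,2)-block M_k^{#}). Assume: (a) M_1^{#}, M_2^{#}, M_3^{#} are not simultaneously diagonalizable; and (b) if the collection {M_1^{#}, M_2^{#}, M_3^{#}} possesses exactly one invariant subspace W of ℂ^2 different from {0} and ℂ^2 (W is then one-dimensional, and each M_k^{#} acts on W by multiplication by a scalar c_k), then (b1) at least one M_k^{#} has two distinct eigenvalues, and (b2) μ_k ≠ c_k for at least one k. Then the triples [M_1, M_2, M_3] and [M̃_1, M̃_2, M̃_3] are equivalent if and only if there exist λ ∈ ℂ \ {0} and a row vector c ∈ ℂ^{1×2} such that α_k = λ·α̃_k + c·M_k^{#} − μ_k·c for every k = 1,2,3. -/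
open Matrix Polynomial

/-- If `e ≠ 0` and the 2×2 determinant of (e|w) vanishes, then `w` is a multiple of `e`. -/
lemma prop2 (e w : Fin 2 → ℂ) (he : e ≠ 0) (h : e 0 * w 1 = e 1 * w 0) : ∃ t : ℂ, w = t • e := by
  by_cases h0 : e 0 = 0
  · have h1 : e 1 ≠ 0 := by
      intro h1; apply he; funext i; fin_cases i <;> simp [h0, h1]
    refine ⟨w 1 / e 1, ?_⟩
    funext i; fin_cases i
    · have : e 1 * w 0 = 0 := by rw [← h, h0]; ring
      have hw0 : w 0 = 0 := by
        rcases mul_eq_zero.1 this with h' | h'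
        · exact absurd h' h1
        · exact h'
      simp [hw0, h0]
    · show w 1 = w 1 / e 1 * e 1
      field_simp
  · refine ⟨w 0 / e 0, ?_⟩
    funext i; fin_cases i
    · show w 0 = w 0 / e 0 * e 0
      field_simp
    · show w 1 = w 0 / e 0 * e 1
      rw [div_mul_eq_mul_div, eq_div_iff h0]
      linear_combination h

/-- kernel of a nonzero 2×2 matrix is a line -/
lemma kerline (J : Matrix (Fin 2) (Fin 2) ℂ) (hJ : J ≠ 0) (e w : Fin 2 → ℂ)
    (he0 : e ≠ 0) (he : J.mulVec e = 0) (hw : J.mulVec w = 0) : ∃ t : ℂ, w = t • e := by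
  apply prop2 e w he0
  by_contra hd
  apply hJ
  have he' : ∀ i, J i 0 * e 0 + J i 1 * e 1 = 0 := by
    intro i; have := congrFun he i
    simpa [Matrix.mulVec, dotProduct, Fin.sum_univ_two] using this
  have hw' : ∀ i, J i 0 * w 0 + J i 1 * w 1 = 0 := by
    intro i; have := congrFun hw i
    simpa [Matrix.mulVec, dotProduct, Fin.sum_univ_two] using this
  have key : ∀ i, J i 0 = 0 ∧ J i 1 = 0 := by
    intro i
    have h1 := he' i; have h2 := hw' i
    constructor
    · have : J i 0 * (e 0 * w 1 - e 1 * w 0) = 0 := by linear_combination w 1 * h1 - e 1 * h2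
      rcases mul_eq_zero.1 this with h' | h'
      · exact h'
      · exact absurd (by linear_combination h') hd
    · have : J i 1 * (e 0 * w 1 - e 1 * w 0) = 0 := by linear_combination e 0 * h2 - w 0 * h1
      rcases mul_eq_zero.1 this with h' | h'
      · exact h'
      · exact absurd (by linear_combination h') hd
  ext i j; fin_cases i <;> fin_cases j <;> simp [(key _).1, (key _).2]

/-- a 2×2 matrix with zero determinant has a nonzero kernel vector, provided it is nonzero;
    in fact even if zero. -/
lemma exkernel (J : Matrix (Fin 2) (Fin 2) ℂ) (hJ : J ≠ 0) (hdet : J.det = 0) :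
    ∃ e : Fin 2 → ℂ, e ≠ 0 ∧ J.mulVec e = 0 := by
  rw [Matrix.det_fin_two] at hdet
  by_cases h0 : J 0 0 = 0 ∧ J 0 1 = 0
  · refine ⟨![J 1 1, -(J 1 0)], ?_, ?_⟩
    · intro h
      apply hJ
      have h1 := congrFun h 0; have h2 := congrFun h 1
      simp at h1 h2
      ext i j; fin_cases i <;> fin_cases j <;> simp [h0.1, h0.2, h1, h2]
    · funext i; fin_cases i
      · simp [Matrix.mulVec, dotProduct, Fin.sum_univ_two, h0.1, h0.2]
      · simp only [Matrix.mulVec, dotProduct, Fin.sum_univ_two]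
        show J 1 0 * J 1 1 + J 1 1 * -(J 1 0) = 0
        ring
  · refine ⟨![J 0 1, -(J 0 0)], ?_, ?_⟩
    · intro h
      apply h0
      have h1 := congrFun h 0; have h2 := congrFun h 1
      simp at h1 h2
      exact ⟨h2, h1⟩
    · funext i; fin_cases i
      · simp only [Matrix.mulVec, dotProduct, Fin.sum_univ_two]
        show J 0 0 * J 0 1 + J 0 1 * -(J 0 0) = 0
        ring
      · simp only [Matrix.mulVec, dotProduct, Fin.sum_univ_two]
        show J 1 0 * J 0 1 + J 1 1 * -(J 0 0) = 0
        linear_combination -hdet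

lemma line_span (W : Submodule ℂ (Fin 2 → ℂ)) (h1 : W ≠ ⊥) (h2 : W ≠ ⊤) :
    ∃ f : Fin 2 → ℂ, f ≠ 0 ∧ W = Submodule.span ℂ {f} := by
  obtain ⟨f, hfW, hf0⟩ := Submodule.exists_mem_ne_zero_of_ne_bot h1
  refine ⟨f, hf0, ?_⟩
  have hle : Submodule.span ℂ {f} ≤ W := Submodule.span_le.2 (Set.singleton_subset_iff.2 hfW)
  have hrk : Module.finrank ℂ W < 2 := by
    have := Submodule.finrank_lt h2
    simpa [Module.finrank_fin_fun] using this
  have hsp : Module.finrank ℂ (Submodule.span ℂ {f}) = 1 := finrank_span_singleton hf0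
  exact (Submodule.eq_of_le_of_finrank_le hle (by omega)).symm

lemma span_ne_top (f : Fin 2 → ℂ) : Submodule.span ℂ {f} ≠ ⊤ := by
  intro h
  have h1 : Module.finrank ℂ (Submodule.span ℂ ({f} : Set (Fin 2 → ℂ))) ≤ 1 := by
    simpa using finrank_span_le_card ({f} : Set (Fin 2 → ℂ))
  rw [h] at h1
  have : Module.finrank ℂ (Fin 2 → ℂ) = 2 := by simp [Module.finrank_fin_fun]
  rw [finrank_top] at h1
  omega

lemma simdiag (N : Fin 3 → Matrix (Fin 2) (Fin 2) ℂ) (e f : Fin 2 → ℂ)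
    (hdet : e 0 * f 1 - e 1 * f 0 ≠ 0) (t t' : Fin 3 → ℂ)
    (he : ∀ k, (N k).mulVec e = t k • e) (hf : ∀ k, (N k).mulVec f = t' k • f) :
    ∃ S : Matrix (Fin 2) (Fin 2) ℂ, IsUnit S ∧ ∀ k, (S⁻¹ * N k * S).IsDiag := by
  set S : Matrix (Fin 2) (Fin 2) ℂ := !![e 0, f 0; e 1, f 1] with hS
  have hdS : S.det = e 0 * f 1 - e 1 * f 0 := by
    rw [hS, Matrix.det_fin_two]; simp; ring
  have hU : IsUnit S.det := by rw [hdS]; exact isUnit_iff_ne_zero.2 hdet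
  refine ⟨S, (Matrix.isUnit_iff_isUnit_det S).2 hU, fun k => ?_⟩
  have hmul : N k * S = S * !![t k, 0; 0, t' k] := by
    have he0 := congrFun (he k) 0
    have he1 := congrFun (he k) 1
    have hf0 := congrFun (hf k) 0
    have hf1 := congrFun (hf k) 1
    simp [Matrix.mulVec, dotProduct, Fin.sum_univ_two] at he0 he1 hf0 hf1
    ext i j
    fin_cases i <;> fin_cases j <;>
      simp [hS, Matrix.mul_apply, Fin.sum_univ_two, he0, he1, hf0, hf1] <;> ring
  rw [Matrix.mul_assoc, hmul, ← Matrix.mul_assoc, Matrix.nonsing_inv_mul S hU, Matrix.one_mul]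
  intro i j hij
  fin_cases i <;> fin_cases j <;> simp_all

lemma charpoly_eval2 (A : Matrix (Fin 2) (Fin 2) ℂ) (x : ℂ) :
    A.charpoly.eval x = (x - A 0 0) * (x - A 1 1) - A 0 1 * A 1 0 := by
  rw [Matrix.charpoly, Matrix.det_fin_two]
  simp [Matrix.charmatrix_apply_eq, Matrix.charmatrix_apply_ne]

lemma same_root (A S T : Matrix (Fin 2) (Fin 2) ℂ) (hS : IsUnit S.det) (hA : A * S = S * T)
    (hT10 : T 1 0 = 0) (hTd : T 1 1 = T 0 0) (x : ℂ) (hx : A.charpoly.IsRoot x) :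
    x = T 0 0 := by
  have hAe : A = S * T * S⁻¹ := by
    rw [← hA, Matrix.mul_nonsing_inv_cancel_right _ _ hS]
  have htr : A.trace = T.trace := by
    rw [hAe, Matrix.trace_mul_cycle, Matrix.nonsing_inv_mul _ hS, Matrix.one_mul]
  have hdet : A.det = T.det := by
    rw [hAe, Matrix.det_mul, Matrix.det_mul, Matrix.det_nonsing_inv, mul_comm, ← mul_assoc,
      Ring.inverse_mul_cancel _ hS, one_mul]
  rw [Polynomial.IsRoot, charpoly_eval2] at hx
  rw [Matrix.trace_fin_two, Matrix.trace_fin_two] at htr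
  rw [Matrix.det_fin_two, Matrix.det_fin_two] at hdet
  have key : (x - T 0 0) ^ 2 = 0 := by
    have h1 : A 0 0 + A 1 1 = 2 * T 0 0 := by rw [htr, hTd]; ring
    have h2 : A 0 0 * A 1 1 - A 0 1 * A 1 0 = T 0 0 ^ 2 := by rw [hdet, hT10, hTd]; ring
    linear_combination hx + x * h1 - h2
  have h2 := pow_eq_zero_iff (n := 2) (by norm_num) |>.1 key
  have := sub_eq_zero.1 h2
  linear_combination this

lemma stepB (μ : Fin 3 → ℂ) (N : Fin 3 → Matrix (Fin 2) (Fin 2) ℂ)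
    (hnd : ¬ ∃ S : Matrix (Fin 2) (Fin 2) ℂ, IsUnit S ∧ ∀ k, (S⁻¹ * N k * S).IsDiag)
    (hb : ∀ W : Submodule ℂ (Fin 2 → ℂ), W ≠ ⊥ → W ≠ ⊤ →
      (∀ k, ∀ v ∈ W, (N k).mulVec v ∈ W) →
      (∀ W' : Submodule ℂ (Fin 2 → ℂ), W' ≠ ⊥ → W' ≠ ⊤ →
        (∀ k, ∀ v ∈ W', (N k).mulVec v ∈ W') → W' = W) →
      (∃ k : Fin 3, ∃ x y : ℂ, x ≠ y ∧ (N k).charpoly.IsRoot x ∧ (N k).charpoly.IsRoot y) ∧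
      (∀ c : Fin 3 → ℂ, (∀ k, ∀ v ∈ W, (N k).mulVec v = c k • v) → ∃ k, μ k ≠ c k))
    (D : Matrix (Fin 2) (Fin 2) ℂ) (hDdet : D.det ≠ 0)
    (hcomm : ∀ k, N k * D = D * N k) :
    ∃ δ : ℂ, δ ≠ 0 ∧ D = δ • (1 : Matrix (Fin 2) (Fin 2) ℂ) := by
  obtain ⟨s, hs⟩ := IsAlgClosed.exists_pow_nat_eq (((D 0 0 + D 1 1) / 2) ^ 2 - D.det)
    (n := 2) two_pos
  rw [Matrix.det_fin_two] at hs
  set δ : ℂ := (D 0 0 + D 1 1) / 2 + s with hδdef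
  set J : Matrix (Fin 2) (Fin 2) ℂ := D - δ • 1 with hJdef
  have hJe : J 0 0 = D 0 0 - δ ∧ J 0 1 = D 0 1 ∧ J 1 0 = D 1 0 ∧ J 1 1 = D 1 1 - δ := by
    refine ⟨?_, ?_, ?_, ?_⟩ <;> simp [hJdef, Matrix.one_apply]
  have hdJ : J.det = 0 := by
    rw [Matrix.det_fin_two, hJe.1, hJe.2.1, hJe.2.2.1, hJe.2.2.2, hδdef]
    linear_combination hs
  by_cases hJ0 : J = 0
  · have hD : D = δ • (1 : Matrix (Fin 2) (Fin 2) ℂ) := sub_eq_zero.1 hJ0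
    refine ⟨δ, ?_, hD⟩
    intro hδ0
    apply hDdet
    rw [hD, hδ0]
    simp
  · exfalso
    obtain ⟨e, he0, heJ⟩ := exkernel J hJ0 hdJ
    have hcommJ : ∀ k, N k * J = J * N k := by
      intro k
      rw [hJdef, Matrix.mul_sub, Matrix.sub_mul, hcomm k, _root_.Matrix.mul_smul, Matrix.smul_mul,
        Matrix.mul_one, Matrix.one_mul]
    have hNe : ∀ k, ∃ t : ℂ, (N k).mulVec e = t • e := by
      intro k
      apply kerline J hJ0 e _ he0 heJ
      rw [Matrix.mulVec_mulVec, ← hcommJ k, ← Matrix.mulVec_mulVec, heJ, Matrix.mulVec_zero]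
    choose t ht using hNe
    set τ : ℂ := J 0 0 + J 1 1 with hτdef
    rw [Matrix.det_fin_two] at hdJ
    by_cases hτ : τ = 0
    · -- nilpotent case
      have hJJ : J * J = 0 := by
        ext i j
        fin_cases i <;> fin_cases j
        · simp only [Matrix.mul_apply, Fin.sum_univ_two, Matrix.zero_apply]
          show J 0 0 * J 0 0 + J 0 1 * J 1 0 = 0
          linear_combination J 0 0 * hτ - hdJ
        · simp only [Matrix.mul_apply, Fin.sum_univ_two, Matrix.zero_apply]
          show J 0 0 * J 0 1 + J 0 1 * J 1 1 = 0
          linear_combination J 0 1 * hτ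
        · simp only [Matrix.mul_apply, Fin.sum_univ_two, Matrix.zero_apply]
          show J 1 0 * J 0 0 + J 1 1 * J 1 0 = 0
          linear_combination J 1 0 * hτ
        · simp only [Matrix.mul_apply, Fin.sum_univ_two, Matrix.zero_apply]
          show J 1 0 * J 0 1 + J 1 1 * J 1 1 = 0
          linear_combination J 1 1 * hτ - hdJ
      -- E := span e is the unique nontrivial invariant subspace
      set E : Submodule ℂ (Fin 2 → ℂ) := Submodule.span ℂ {e} with hE
      have hEinv : ∀ k, ∀ v ∈ E, (N k).mulVec v ∈ E := by
        intro k v hv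
        obtain ⟨r, rfl⟩ := Submodule.mem_span_singleton.1 hv
        rw [Matrix.mulVec_smul, ht k, smul_comm]
        exact Submodule.smul_mem _ _ (Submodule.smul_mem _ _
          (Submodule.mem_span_singleton_self e))
      have hEbot : E ≠ ⊥ := by
        rw [hE, Ne, Submodule.span_singleton_eq_bot]; exact he0
      have hEtop : E ≠ ⊤ := span_ne_top e
      have hEuniq : ∀ W' : Submodule ℂ (Fin 2 → ℂ), W' ≠ ⊥ → W' ≠ ⊤ →
          (∀ k, ∀ v ∈ W', (N k).mulVec v ∈ W') → W' = E := by
        intro W' h1 h2 h3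
        obtain ⟨f, hf0, rfl⟩ := line_span W' h1 h2
        have hfe : ∀ k, ∃ r : ℂ, (N k).mulVec f = r • f := by
          intro k
          obtain ⟨r, hr⟩ := Submodule.mem_span_singleton.1
            (h3 k f (Submodule.mem_span_singleton_self f))
          exact ⟨r, hr.symm⟩
        choose r hr using hfe
        by_cases hprop : e 0 * f 1 - e 1 * f 0 = 0
        · obtain ⟨rr, rfl⟩ := prop2 e f he0 (by linear_combination hprop)
          have hrr : rr ≠ 0 := by rintro rfl; simp at hf0
          rw [hE, Submodule.span_singleton_smul_eq (isUnit_iff_ne_zero.2 hrr)]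
        · exact absurd (simdiag N e f hprop t r ht hr) hnd
      obtain ⟨⟨k, x, y, hxy, hx, hy⟩, -⟩ := hb E hEbot hEtop hEinv hEuniq
      -- find w with J w ≠ 0
      have hwex : ∃ w : Fin 2 → ℂ, J.mulVec w ≠ 0 := by
        by_contra h
        push_neg at h
        apply hJ0
        ext i j
        have h0 := congrFun (h ![1, 0]) i
        have h1 := congrFun (h ![0, 1]) i
        simp [Matrix.mulVec, dotProduct, Fin.sum_univ_two] at h0 h1
        fin_cases j <;> simp [h0, h1]
      obtain ⟨w, hw⟩ := hwex
      have hJu : J.mulVec (J.mulVec w) = 0 := by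
        rw [Matrix.mulVec_mulVec, hJJ, Matrix.zero_mulVec]
      obtain ⟨sc, hsc⟩ := kerline J hJ0 e (J.mulVec w) he0 heJ hJu
      have hsc0 : sc ≠ 0 := by
        rintro rfl
        rw [zero_smul] at hsc
        exact hw hsc
      have hΔ : e 0 * w 1 - e 1 * w 0 ≠ 0 := by
        intro h
        obtain ⟨r0, rfl⟩ := prop2 e w he0 (by linear_combination h)
        apply hw
        rw [Matrix.mulVec_smul, heJ, smul_zero]
      set Δ : ℂ := e 0 * w 1 - e 1 * w 0 with hΔdef
      set Nw : Fin 2 → ℂ := (N k).mulVec w with hNwdef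
      set b0 : ℂ := (Nw 0 * w 1 - Nw 1 * w 0) / Δ with hb0def
      set b1 : ℂ := (e 0 * Nw 1 - e 1 * Nw 0) / Δ with hb1def
      have hNw : Nw = b0 • e + b1 • w := by
        funext i
        fin_cases i
        · show Nw 0 = b0 * e 0 + b1 * w 0
          rw [hb0def, hb1def]
          field_simp
          ring
        · show Nw 1 = b0 * e 1 + b1 * w 1
          rw [hb0def, hb1def]
          field_simp
          ring
      have hb1 : b1 = t k := by
        have h1 : J.mulVec Nw = (N k).mulVec (J.mulVec w) := by
          rw [hNwdef, Matrix.mulVec_mulVec, Matrix.mulVec_mulVec, hcommJ k]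
        rw [hNw, hsc, Matrix.mulVec_add, Matrix.mulVec_smul, Matrix.mulVec_smul, heJ, hsc,
          Matrix.mulVec_smul, ht k] at h1
        have h2 : (b1 * sc) • e = (sc * t k) • e := by
          rw [mul_smul, mul_smul]
          simpa using h1
        have h3 : (b1 * sc - sc * t k) • e = 0 := by
          rw [sub_smul, h2, sub_self]
        rcases smul_eq_zero.1 h3 with h' | h'
        · have h'' : sc * (b1 - t k) = 0 := by linear_combination h'
          rcases mul_eq_zero.1 h'' with h3' | h3'
          · exact absurd h3' hsc0
          · exact sub_eq_zero.1 h3'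
        · exact absurd h' he0
      -- build S and T
      set S : Matrix (Fin 2) (Fin 2) ℂ := !![e 0, w 0; e 1, w 1] with hSdef
      have hSU : IsUnit S.det := by
        have hsd : S.det = e 0 * w 1 - e 1 * w 0 := by
          rw [hSdef, Matrix.det_fin_two]; simp; ring
        rw [hsd, ← hΔdef]
        exact isUnit_iff_ne_zero.2 hΔ
      set T : Matrix (Fin 2) (Fin 2) ℂ := !![t k, b0; 0, t k] with hTdef
      have hST : N k * S = S * T := by
        have he1 := congrFun (ht k) 0
        have he2 := congrFun (ht k) 1
        have hw1 := congrFun hNw 0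
        have hw2 := congrFun hNw 1
        simp [Matrix.mulVec, dotProduct, Fin.sum_univ_two, hNwdef] at he1 he2 hw1 hw2
        ext i j
        fin_cases i <;> fin_cases j <;>
          simp [hSdef, hTdef, Matrix.mul_apply, Fin.sum_univ_two] <;>
          first
            | (rw [show (N k) 0 0 * e 0 + (N k) 0 1 * e 1 = t k * e 0 from he1]; ring)
            | (rw [show (N k) 1 0 * e 0 + (N k) 1 1 * e 1 = t k * e 1 from he2]; ring)
            | (rw [show (N k) 0 0 * w 0 + (N k) 0 1 * w 1 = b0 * e 0 + b1 * w 0 from hw1, hb1]; ring)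
            | (rw [show (N k) 1 0 * w 0 + (N k) 1 1 * w 1 = b0 * e 1 + b1 * w 1 from hw2, hb1]; ring)
      have hxT := same_root (N k) S T hSU hST (by rw [hTdef]; simp) (by rw [hTdef]; simp) x hx
      have hyT := same_root (N k) S T hSU hST (by rw [hTdef]; simp) (by rw [hTdef]; simp) y hy
      exact hxy (hxT.trans hyT.symm)
    · -- distinct eigenvalues case
      set J' : Matrix (Fin 2) (Fin 2) ℂ := J - τ • 1 with hJ'def
      have hJ'e : J' 0 0 = J 0 0 - τ ∧ J' 0 1 = J 0 1 ∧ J' 1 0 = J 1 0 ∧ J' 1 1 = J 1 1 - τ := by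
        refine ⟨?_, ?_, ?_, ?_⟩ <;> simp [hJ'def, Matrix.one_apply]
      have hdJ' : J'.det = 0 := by
        rw [Matrix.det_fin_two, hJ'e.1, hJ'e.2.1, hJ'e.2.2.1, hJ'e.2.2.2]
        linear_combination hdJ + (J 1 1 - τ) * hτdef - τ * hτdef + τ * hτdef
      have hJ'0 : J' ≠ 0 := by
        intro h
        have hJτ : J = τ • (1 : Matrix (Fin 2) (Fin 2) ℂ) := sub_eq_zero.1 h
        have hvals : J 0 1 = 0 ∧ J 1 0 = 0 ∧ J 0 0 = τ ∧ J 1 1 = τ := by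
          refine ⟨?_, ?_, ?_, ?_⟩ <;> rw [hJτ] <;> simp [Matrix.one_apply]
        have h2 : τ * τ = 0 := by
          have h3 := hdJ
          rw [hvals.1, hvals.2.1, hvals.2.2.1, hvals.2.2.2] at h3
          linear_combination h3
        rcases mul_eq_zero.1 h2 with h' | h' <;> exact hτ h'
      obtain ⟨f, hf0, hfJ'⟩ := exkernel J' hJ'0 hdJ'
      have hcommJ' : ∀ k, N k * J' = J' * N k := by
        intro k
        rw [hJ'def, Matrix.mul_sub, Matrix.sub_mul, hcommJ k, _root_.Matrix.mul_smul, Matrix.smul_mul,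
          Matrix.mul_one, Matrix.one_mul]
      have hNf : ∀ k, ∃ r : ℂ, (N k).mulVec f = r • f := by
        intro k
        apply kerline J' hJ'0 f _ hf0 hfJ'
        rw [Matrix.mulVec_mulVec, ← hcommJ' k, ← Matrix.mulVec_mulVec, hfJ', Matrix.mulVec_zero]
      choose r hr using hNf
      have hΔ : e 0 * f 1 - e 1 * f 0 ≠ 0 := by
        intro h
        obtain ⟨rr, rfl⟩ := prop2 e f he0 (by linear_combination h)
        have h1 : J.mulVec (rr • e) = 0 := by rw [Matrix.mulVec_smul, heJ, smul_zero]
        have h3 : J'.mulVec (rr • e) = J.mulVec (rr • e) - τ • (rr • e) := by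
          rw [hJ'def, Matrix.sub_mulVec, Matrix.smul_mulVec, Matrix.one_mulVec]
        rw [hfJ', h1] at h3
        have h4 : τ • (rr • e) = 0 := by
          have h5 := h3.symm
          rw [zero_sub, neg_eq_zero] at h5
          exact h5
        rcases smul_eq_zero.1 h4 with h' | h'
        · exact hτ h'
        · exact hf0 h'
      exact hnd (simdiag N e f hΔ t r ht hr)

lemma stepA (μ : Fin 3 → ℂ) (N : Fin 3 → Matrix (Fin 2) (Fin 2) ℂ)
    (hnd : ¬ ∃ S : Matrix (Fin 2) (Fin 2) ℂ, IsUnit S ∧ ∀ k, (S⁻¹ * N k * S).IsDiag)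
    (hb : ∀ W : Submodule ℂ (Fin 2 → ℂ), W ≠ ⊥ → W ≠ ⊤ →
      (∀ k, ∀ v ∈ W, (N k).mulVec v ∈ W) →
      (∀ W' : Submodule ℂ (Fin 2 → ℂ), W' ≠ ⊥ → W' ≠ ⊤ →
        (∀ k, ∀ v ∈ W', (N k).mulVec v ∈ W') → W' = W) →
      (∃ k : Fin 3, ∃ x y : ℂ, x ≠ y ∧ (N k).charpoly.IsRoot x ∧ (N k).charpoly.IsRoot y) ∧
      (∀ c : Fin 3 → ℂ, (∀ k, ∀ v ∈ W, (N k).mulVec v = c k • v) → ∃ k, μ k ≠ c k))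
    (d : Fin 2 → ℂ) (hd : d ≠ 0) (hNd : ∀ k, (N k).mulVec d = μ k • d) : False := by
  set W : Submodule ℂ (Fin 2 → ℂ) := Submodule.span ℂ {d} with hW
  have heig : ∀ k, ∀ v ∈ W, (N k).mulVec v = μ k • v := by
    intro k v hv
    obtain ⟨r, rfl⟩ := Submodule.mem_span_singleton.1 hv
    rw [Matrix.mulVec_smul, hNd k, smul_comm]
  have hWinv : ∀ k, ∀ v ∈ W, (N k).mulVec v ∈ W := by
    intro k v hv
    rw [heig k v hv]
    exact Submodule.smul_mem _ _ hv
  have hWbot : W ≠ ⊥ := by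
    rw [hW, Ne, Submodule.span_singleton_eq_bot]; exact hd
  have hWtop : W ≠ ⊤ := span_ne_top d
  by_cases huniq : ∀ W' : Submodule ℂ (Fin 2 → ℂ), W' ≠ ⊥ → W' ≠ ⊤ →
      (∀ k, ∀ v ∈ W', (N k).mulVec v ∈ W') → W' = W
  · obtain ⟨_, h2⟩ := hb W hWbot hWtop hWinv huniq
    obtain ⟨k, hk⟩ := h2 μ heig
    exact hk rfl
  · push_neg at huniq
    obtain ⟨W', hW'bot, hW'top, hW'inv, hW'ne⟩ := huniq
    obtain ⟨f, hf0, rfl⟩ := line_span W' hW'bot hW'top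
    have hfe : ∀ k, ∃ t : ℂ, (N k).mulVec f = t • f := by
      intro k
      have := hW'inv k f (Submodule.mem_span_singleton_self f)
      obtain ⟨r, hr⟩ := Submodule.mem_span_singleton.1 this
      exact ⟨r, hr.symm⟩
    choose t ht using hfe
    have hdet : d 0 * f 1 - d 1 * f 0 ≠ 0 := by
      intro hz
      obtain ⟨r, rfl⟩ := prop2 d f hd (by linear_combination hz)
      have hr : r ≠ 0 := by rintro rfl; simp at hf0
      exact hW'ne (by rw [hW, Submodule.span_singleton_smul_eq (isUnit_iff_ne_zero.2 hr)])
    exact hnd (simdiag N d f hdet μ t hNd ht)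

/-- (Proposition 7.4 of the paper.) For `(1,2)`-block upper
triangular `3×3` triples with fixed blocks `μ_k`, `M_k^{#}`, under conditions
(a) and (b), the triples built from `α_k` and `α̃_k` are equivalent iff
`α_k = λ α̃_k + c M_k^{#} − μ_k c` for some `λ ≠ 0` and a row vector `c`. -/
theorem stmt4 (μ : Fin 3 → ℂ) (a a' : Fin 3 → Fin 2 → ℂ)
    (N : Fin 3 → Matrix (Fin 2) (Fin 2) ℂ)
    (M M' : Fin 3 → Matrix (Fin 3) (Fin 3) ℂ)
    (hM : ∀ k, M k = !![μ k, a k 0, a k 1;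
                        0, N k 0 0, N k 0 1;
                        0, N k 1 0, N k 1 1])
    (hM' : ∀ k, M' k = !![μ k, a' k 0, a' k 1;
                          0, N k 0 0, N k 0 1;
                          0, N k 1 0, N k 1 1])
    (hnd : ¬ ∃ S : Matrix (Fin 2) (Fin 2) ℂ, IsUnit S ∧ ∀ k, (S⁻¹ * N k * S).IsDiag)
    (hb : ∀ W : Submodule ℂ (Fin 2 → ℂ), W ≠ ⊥ → W ≠ ⊤ →
      (∀ k, ∀ v ∈ W, (N k).mulVec v ∈ W) →
      (∀ W' : Submodule ℂ (Fin 2 → ℂ), W' ≠ ⊥ → W' ≠ ⊤ →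
        (∀ k, ∀ v ∈ W', (N k).mulVec v ∈ W') → W' = W) →
      (∃ k : Fin 3, ∃ x y : ℂ, x ≠ y ∧ (N k).charpoly.IsRoot x ∧ (N k).charpoly.IsRoot y) ∧
      (∀ c : Fin 3 → ℂ, (∀ k, ∀ v ∈ W, (N k).mulVec v = c k • v) → ∃ k, μ k ≠ c k)) :
    (∃ C : Matrix (Fin 3) (Fin 3) ℂ, IsUnit C ∧ ∀ k, M' k = C⁻¹ * M k * C) ↔
      ∃ lam : ℂ, lam ≠ 0 ∧ ∃ c : Fin 2 → ℂ,
        ∀ k, a k = lam • a' k + Matrix.vecMul c (N k) - μ k • c := by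
  constructor
  · rintro ⟨C, hU, hC⟩
    have hdetC : IsUnit C.det := (Matrix.isUnit_iff_isUnit_det C).1 hU
    have hCM : ∀ k, M k * C = C * M' k := by
      intro k
      rw [hC k, ← Matrix.mul_assoc, ← Matrix.mul_assoc, Matrix.mul_nonsing_inv _ hdetC,
        Matrix.one_mul]
    have Eq : ∀ (k : Fin 3) (i j : Fin 3), (M k * C) i j = (C * M' k) i j :=
      fun k i j => congrFun (congrFun (hCM k) i) j
    by_cases hd : C 1 0 = 0 ∧ C 2 0 = 0
    · -- d = 0 case
      set D : Matrix (Fin 2) (Fin 2) ℂ := !![C 1 1, C 1 2; C 2 1, C 2 2] with hDdef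
      have hdetfact : C.det = C 0 0 * D.det := by
        rw [Matrix.det_fin_three, hDdef, Matrix.det_fin_two]
        simp [hd.1, hd.2]
        ring
      have hC00 : C 0 0 ≠ 0 := by
        intro h
        apply isUnit_iff_ne_zero.1 hdetC
        rw [hdetfact, h, zero_mul]
      have hDdet : D.det ≠ 0 := by
        intro h
        apply isUnit_iff_ne_zero.1 hdetC
        rw [hdetfact, h, mul_zero]
      have hcomm : ∀ k, N k * D = D * N k := by
        intro k
        have E11 := Eq k 1 1
        have E12 := Eq k 1 2
        have E21 := Eq k 2 1
        have E22 := Eq k 2 2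
        simp [Matrix.mul_apply, Fin.sum_univ_three, hM, hM', Matrix.vecHead, Matrix.vecTail]
          at E11 E12 E21 E22
        ext i j
        fin_cases i <;> fin_cases j <;>
            simp [hDdef, Matrix.mul_apply, Fin.sum_univ_two]
        · linear_combination E11 + a' k 0 * hd.1
        · linear_combination E12 + a' k 1 * hd.1
        · linear_combination E21 + a' k 0 * hd.2
        · linear_combination E22 + a' k 1 * hd.2
      obtain ⟨δ, hδ0, hDδ⟩ := stepB μ N hnd hb D hDdet hcomm
      have h11 : C 1 1 = δ := by
        have := congrFun (congrFun hDδ 0) 0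
        simpa [hDdef, Matrix.one_apply] using this
      have h12 : C 1 2 = 0 := by
        have := congrFun (congrFun hDδ 0) 1
        simpa [hDdef, Matrix.one_apply] using this
      have h21 : C 2 1 = 0 := by
        have := congrFun (congrFun hDδ 1) 0
        simpa [hDdef, Matrix.one_apply] using this
      have h22 : C 2 2 = δ := by
        have := congrFun (congrFun hDδ 1) 1
        simpa [hDdef, Matrix.one_apply] using this
      refine ⟨C 0 0 / δ, div_ne_zero hC00 hδ0, ![C 0 1 / δ, C 0 2 / δ], fun k => ?_⟩
      have E01 := Eq k 0 1
      have E02 := Eq k 0 2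
      simp [Matrix.mul_apply, Fin.sum_univ_three, hM, hM', Matrix.vecHead, Matrix.vecTail]
        at E01 E02
      funext j
      fin_cases j <;>
        simp [Matrix.vecMul, dotProduct, Fin.sum_univ_two]
      · field_simp
        linear_combination E01 - a k 0 * h11 - a k 1 * h21
      · field_simp
        linear_combination E02 - a k 0 * h12 - a k 1 * h22
    · -- d ≠ 0 case : contradiction
      exfalso
      set d : Fin 2 → ℂ := ![C 1 0, C 2 0] with hddef
      have hd0 : d ≠ 0 := by
        intro h
        apply hd
        constructor
        · have := congrFun h 0; simpa [hddef] using this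
        · have := congrFun h 1; simpa [hddef] using this
      have hNd : ∀ k, (N k).mulVec d = μ k • d := by
        intro k
        have E10 := Eq k 1 0
        have E20 := Eq k 2 0
        simp [Matrix.mul_apply, Fin.sum_univ_three, hM, hM', Matrix.vecHead, Matrix.vecTail]
          at E10 E20
        funext i
        fin_cases i <;> simp [hddef, Matrix.mulVec, dotProduct, Fin.sum_univ_two]
        · linear_combination E10
        · linear_combination E20
      exact stepA μ N hnd hb d hd0 hNd
  · rintro ⟨lam, hlam, c, h⟩
    set C : Matrix (Fin 3) (Fin 3) ℂ := !![lam, c 0, c 1; 0, 1, 0; 0, 0, 1] with hCdef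
    have hdet : C.det = lam := by
      rw [hCdef, Matrix.det_fin_three]
      simp [Matrix.vecHead, Matrix.vecTail]
    have hdu : IsUnit C.det := by rw [hdet]; exact isUnit_iff_ne_zero.2 hlam
    refine ⟨C, (Matrix.isUnit_iff_isUnit_det C).2 hdu, fun k => ?_⟩
    have h0 := congrFun (h k) 0
    have h1 := congrFun (h k) 1
    simp [Matrix.vecMul, dotProduct, Fin.sum_univ_two] at h0 h1
    have key : C * M' k = M k * C := by
      ext i j
      fin_cases i <;> fin_cases j <;>
        simp [hCdef, hM, hM', Matrix.mul_apply, Fin.sum_univ_three, Matrix.vecHead,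
          Matrix.vecTail] <;>
        first
          | ring1
          | linear_combination -h0
          | linear_combination -h1
          | linear_combination h0
          | linear_combination h1
          | linear_combination h0 + h1
          | linear_combination -h0 - h1
    symm
    rw [Matrix.mul_assoc, ← key, ← Matrix.mul_assoc, Matrix.nonsing_inv_mul _ hdu,
      Matrix.one_mul]
end

section
/- For k = 1,2,3 let μ_k ∈ ℂ, let α_k, α̃_k ∈ ℂ^{2×1} be column vectors, let M_k^{#} be 2×2 complex matrices, and define the 3×3 complex matrices M_k = [[M_k^{#}, α_k],[0, μ_k]] and M̃_k = [[M_k^{#}, α̃_k],[0, μ_k]] (block upper triangular with (1,1)-block M_k^{#}, (1,2)-block α_k resp. α̃_k, and (2,2)-block μ_k). Assume: (a) M_1^{#}, M_2^{#}, M_3^{#} are not simultaneously diagonalizable; and (b) if the collection {M_1^{#}, M_2^{#}, M_3^{#}} possesses exactly one invariant subspace W of ℂ^2 different from {0} and ℂ^2 (W is then one-dimensional, and each M_k^{#} induces multiplication by a scalar d_k on the quotient ℂ^2/W), then (b1) at least one M_k^{#} has two distinct eigenvalues, and (b2) μ_k ≠ d_k for at least one k. Then the triples [M_1, M_2, M_3]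 and [M̃_1, M̃_2, M̃_3] are equivalent if and only if there exist λ ∈ ℂ \ {0} and a column vector c ∈ ℂ^{2×1} such that α_k = λ·α̃_k + M_k^{#}·c − c·μ_k for every k = 1,2,3. -/
namespace Stmt5Aux
open Matrix

lemma vne (x : Fin 2 → ℂ) (h : x 0 ≠ 0 ∨ x 1 ≠ 0) : x ≠ 0 := by
  intro h0; rcases h with h | h <;> exact h (by rw [h0]; rfl)

lemma necomp (x : Fin 2 → ℂ) (h : x ≠ 0) : x 0 ≠ 0 ∨ x 1 ≠ 0 := by
  by_contra hc
  push_neg at hc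
  exact h (funext fun i => by fin_cases i <;> simp [hc.1, hc.2])

lemma expand2 (x y w : Fin 2 → ℂ) (h : x 0 * y 1 - x 1 * y 0 ≠ 0) :
    ∃ α β : ℂ, w = α • x + β • y := by
  refine ⟨(w 0 * y 1 - w 1 * y 0)/(x 0 * y 1 - x 1 * y 0),
          (x 0 * w 1 - x 1 * w 0)/(x 0 * y 1 - x 1 * y 0), ?_⟩
  have h' : y 1 * x 0 - y 0 * x 1 ≠ 0 := by intro h'; apply h; linear_combination h'
  funext i
  fin_cases i <;> simp <;> field_simp <;> ring

lemma dep2 (v u : Fin 2 → ℂ) (hv : v ≠ 0) (hdet : v 0 * u 1 - v 1 * u 0 = 0) :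
    ∃ c : ℂ, u = c • v := by
  by_cases h0 : v 0 = 0
  · have h1 : v 1 ≠ 0 := by rcases necomp v hv with h | h; exact absurd h0 h; exact h
    refine ⟨u 1 / v 1, funext fun i => ?_⟩
    fin_cases i <;> simp
    · field_simp
      have h2 : v 1 * u 0 = 0 := by linear_combination -hdet + u 1 * h0
      linear_combination h2 - u 1 * h0
    · field_simp
  · refine ⟨u 0 / v 0, funext fun i => ?_⟩
    fin_cases i <;> simp
    · field_simp
    · field_simp
      linear_combination hdet

lemma uniqcoef (x y : Fin 2 → ℂ) (h : x 0 * y 1 - x 1 * y 0 ≠ 0) (α β : ℂ)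
    (hz : α • x + β • y = 0) : α = 0 ∧ β = 0 := by
  have h0 : α * x 0 + β * y 0 = 0 := by have := congrFun hz 0; simpa using this
  have h1 : α * x 1 + β * y 1 = 0 := by have := congrFun hz 1; simpa using this
  constructor
  · have : α * (x 0 * y 1 - x 1 * y 0) = 0 := by linear_combination y 1 * h0 - y 0 * h1
    exact (mul_eq_zero.mp this).resolve_right h
  · have : β * (x 0 * y 1 - x 1 * y 0) = 0 := by linear_combination x 0 * h1 - x 1 * h0
    exact (mul_eq_zero.mp this).resolve_right h


variable (v u : Fin 2 → ℂ)

/-- complement vector -/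
lemma compl2 (hv : v ≠ 0) : ∃ w : Fin 2 → ℂ, v 0 * w 1 - v 1 * w 0 ≠ 0 := by
  by_cases h0 : v 0 = 0
  · exact ⟨![1, 0], by have := (necomp v hv).resolve_left (by simpa using h0); simpa using this⟩
  · exact ⟨![0, 1], by simpa using h0⟩

lemma span_ne_top (hv : v ≠ 0) : Submodule.span ℂ {v} ≠ ⊤ := by
  obtain ⟨w, hw⟩ := compl2 v hv
  intro h
  have hwmem : w ∈ Submodule.span ℂ {v} := h ▸ Submodule.mem_top
  obtain ⟨c, hc⟩ := Submodule.mem_span_singleton.mp hwmem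
  apply hw
  rw [← hc]
  simp; ring

lemma line_struct (W : Submodule ℂ (Fin 2 → ℂ)) (h1 : W ≠ ⊥) (h2 : W ≠ ⊤) :
    ∃ v : Fin 2 → ℂ, v ≠ 0 ∧ W = Submodule.span ℂ {v} := by
  obtain ⟨v, hvW, hv⟩ := Submodule.exists_mem_ne_zero_of_ne_bot h1
  refine ⟨v, hv, le_antisymm ?_ ?_⟩
  · intro u huW
    by_cases hd : v 0 * u 1 - v 1 * u 0 = 0
    · obtain ⟨c, hc⟩ := dep2 v u hv hd
      exact Submodule.mem_span_singleton.mpr ⟨c, hc.symm⟩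
    · exfalso
      apply h2
      rw [eq_top_iff]
      intro w _
      obtain ⟨α, β, hw⟩ := expand2 v u w hd
      rw [hw]
      exact W.add_mem (W.smul_mem _ hvW) (W.smul_mem _ huW)
  · rw [Submodule.span_le, Set.singleton_subset_iff]; exact hvW

lemma simdiag (N : Fin 3 → Matrix (Fin 2) (Fin 2) ℂ) (x z : Fin 2 → ℂ)
    (hdet : x 0 * z 1 - x 1 * z 0 ≠ 0) (e g : Fin 3 → ℂ)
    (hx : ∀ k, (N k).mulVec x = e k • x) (hz : ∀ k, (N k).mulVec z = g k • z) :
    ∃ S : Matrix (Fin 2) (Fin 2) ℂ, IsUnit S ∧ ∀ k, (S⁻¹ * N k * S).IsDiag := by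
  set S : Matrix (Fin 2) (Fin 2) ℂ := !![x 0, z 0; x 1, z 1] with hS
  have hdS : IsUnit S.det := by
    rw [isUnit_iff_ne_zero, Matrix.det_fin_two]
    simp [hS]
    intro h; apply hdet; linear_combination h
  refine ⟨S, (Matrix.isUnit_iff_isUnit_det S).mpr hdS, fun k => ?_⟩
  have key : N k * S = S * !![e k, 0; 0, g k] := by
    have hx0 := congrFun (hx k) 0
    have hx1 := congrFun (hx k) 1
    have hz0 := congrFun (hz k) 0
    have hz1 := congrFun (hz k) 1
    simp [Matrix.mulVec, dotProduct, Fin.sum_univ_two] at hx0 hx1 hz0 hz1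
    ext i j
    fin_cases i <;> fin_cases j <;>
      simp [hS, Matrix.mul_apply, Fin.sum_univ_two] <;>
      [linear_combination hx0; linear_combination hz0; linear_combination hx1;
       linear_combination hz1]
  have : S⁻¹ * N k * S = !![e k, 0; 0, g k] := by
    rw [Matrix.mul_assoc, key, ← Matrix.mul_assoc, Matrix.nonsing_inv_mul S hdS, Matrix.one_mul]
  rw [this]
  intro i j hij
  fin_cases i <;> fin_cases j <;> simp_all

lemma quad_root (t d : ℂ) : ∃ ρ : ℂ, ρ * ρ - t * ρ + d = 0 := by
  obtain ⟨s, hs⟩ := IsAlgClosed.exists_pow_nat_eq (t * t - 4 * d) (n := 2) (by norm_num)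
  exact ⟨(t + s) / 2, by linear_combination hs / 4⟩

lemma ker_of_det (A : Matrix (Fin 2) (Fin 2) ℂ) (h : A.det = 0) :
    ∃ v : Fin 2 → ℂ, v ≠ 0 ∧ A.mulVec v = 0 := by
  rw [Matrix.det_fin_two] at h
  by_cases h1 : A 1 1 ≠ 0 ∨ A 1 0 ≠ 0
  · refine ⟨![A 1 1, -(A 1 0)], vne _ (by simpa using h1), ?_⟩
    funext i
    fin_cases i <;> simp [Matrix.mulVec, dotProduct, Fin.sum_univ_two] <;> [skip; skip] <;> first | linear_combination h | linear_combination -h | ring1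
  · by_cases h2 : A 0 1 ≠ 0 ∨ A 0 0 ≠ 0
    · refine ⟨![A 0 1, -(A 0 0)], vne _ (by simpa using h2), ?_⟩
      funext i
      fin_cases i <;> simp [Matrix.mulVec, dotProduct, Fin.sum_univ_two] <;> [skip; skip] <;> first | linear_combination h | linear_combination -h | ring1
    · push_neg at h1 h2
      refine ⟨![1, 0], vne _ (by simp), ?_⟩
      funext i
      fin_cases i <;> simp [Matrix.mulVec, dotProduct, Fin.sum_univ_two, h1.1, h1.2, h2.1, h2.2]

lemma ker_line (A : Matrix (Fin 2) (Fin 2) ℂ) (hA : A ≠ 0)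
    (hv : A.mulVec v = 0) (hu : A.mulVec u = 0) : v 0 * u 1 - v 1 * u 0 = 0 := by
  have hv0 : A 0 0 * v 0 + A 0 1 * v 1 = 0 := by
    have := congrFun hv 0; simpa [Matrix.mulVec, dotProduct, Fin.sum_univ_two] using this
  have hv1 : A 1 0 * v 0 + A 1 1 * v 1 = 0 := by
    have := congrFun hv 1; simpa [Matrix.mulVec, dotProduct, Fin.sum_univ_two] using this
  have hu0 : A 0 0 * u 0 + A 0 1 * u 1 = 0 := by
    have := congrFun hu 0; simpa [Matrix.mulVec, dotProduct, Fin.sum_univ_two] using this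
  have hu1 : A 1 0 * u 0 + A 1 1 * u 1 = 0 := by
    have := congrFun hu 1; simpa [Matrix.mulVec, dotProduct, Fin.sum_univ_two] using this
  by_cases h00 : A 0 0 ≠ 0
  · have : A 0 0 * (v 0 * u 1 - v 1 * u 0) = 0 := by linear_combination u 1 * hv0 - v 1 * hu0
    exact (mul_eq_zero.mp this).resolve_left h00
  by_cases h01 : A 0 1 ≠ 0
  · have : A 0 1 * (v 0 * u 1 - v 1 * u 0) = 0 := by linear_combination v 0 * hu0 - u 0 * hv0
    exact (mul_eq_zero.mp this).resolve_left h01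
  by_cases h10 : A 1 0 ≠ 0
  · have : A 1 0 * (v 0 * u 1 - v 1 * u 0) = 0 := by linear_combination u 1 * hv1 - v 1 * hu1
    exact (mul_eq_zero.mp this).resolve_left h10
  by_cases h11 : A 1 1 ≠ 0
  · have : A 1 1 * (v 0 * u 1 - v 1 * u 0) = 0 := by linear_combination v 0 * hu1 - u 0 * hv1
    exact (mul_eq_zero.mp this).resolve_left h11
  · exfalso
    push_neg at h00 h01 h10 h11
    exact hA (by ext i j; fin_cases i <;> fin_cases j <;> simpa)

lemma ann_basis (A : Matrix (Fin 2) (Fin 2) ℂ) (w : Fin 2 → ℂ)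
    (hd : v 0 * w 1 - v 1 * w 0 ≠ 0)
    (hv : A.mulVec v = 0) (hw : A.mulVec w = 0) : A = 0 := by
  ext i j
  have h1 : A i 0 * v 0 + A i 1 * v 1 = 0 := by
    have := congrFun hv i; simpa [Matrix.mulVec, dotProduct, Fin.sum_univ_two] using this
  have h2 : A i 0 * w 0 + A i 1 * w 1 = 0 := by
    have := congrFun hw i; simpa [Matrix.mulVec, dotProduct, Fin.sum_univ_two] using this
  have k0 : A i 0 * (v 0 * w 1 - v 1 * w 0) = 0 := by linear_combination w 1 * h1 - v 1 * h2
  have k1 : A i 1 * (v 0 * w 1 - v 1 * w 0) = 0 := by linear_combination v 0 * h2 - w 0 * h1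
  fin_cases j
  · simpa using (mul_eq_zero.mp k0).resolve_right hd
  · simpa using (mul_eq_zero.mp k1).resolve_right hd

/-- eval of charpoly for 2x2 -/
lemma charpoly_root (A : Matrix (Fin 2) (Fin 2) ℂ) (x : ℂ) (h : A.charpoly.IsRoot x) :
    x * x - (A 0 0 + A 1 1) * x + (A 0 0 * A 1 1 - A 0 1 * A 1 0) = 0 := by
  have : A.charpoly = (Polynomial.X - Polynomial.C (A 0 0)) * (Polynomial.X - Polynomial.C (A 1 1))
      - Polynomial.C (A 0 1) * Polynomial.C (A 1 0) := by
    rw [Matrix.charpoly, Matrix.det_fin_two]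
    simp [Matrix.charmatrix_apply_eq, Matrix.charmatrix_apply_ne]
  rw [Polynomial.IsRoot, this] at h
  simp at h
  linear_combination h


/-- Any nontrivial invariant subspace equals the line spanned by a common eigenvector. -/
lemma uniq_line (N : Fin 3 → Matrix (Fin 2) (Fin 2) ℂ)
    (hnd : ¬ ∃ S : Matrix (Fin 2) (Fin 2) ℂ, IsUnit S ∧ ∀ k, (S⁻¹ * N k * S).IsDiag)
    (v : Fin 2 → ℂ) (hv : v ≠ 0) (e : Fin 3 → ℂ)
    (hev : ∀ k, (N k).mulVec v = e k • v) :
    ∀ W' : Submodule ℂ (Fin 2 → ℂ), W' ≠ ⊥ → W' ≠ ⊤ →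
      (∀ k, ∀ u ∈ W', (N k).mulVec u ∈ W') → W' = Submodule.span ℂ {v} := by
  intro W' hb ht hinv
  obtain ⟨z, hz, hWz⟩ := line_struct W' hb ht
  have hzW : z ∈ W' := hWz ▸ Submodule.mem_span_singleton_self z
  have hg : ∀ k, ∃ g : ℂ, (N k).mulVec z = g • z := by
    intro k
    have := hinv k z hzW
    rw [hWz] at this
    obtain ⟨g, hg⟩ := Submodule.mem_span_singleton.mp this
    exact ⟨g, hg.symm⟩
  choose g hgz using hg
  by_cases hd : v 0 * z 1 - v 1 * z 0 = 0
  · obtain ⟨c, hc⟩ := dep2 v z hv hd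
    have hc0 : c ≠ 0 := by rintro rfl; simp at hc; exact hz hc
    rw [hWz]
    apply le_antisymm
    · rw [Submodule.span_le, Set.singleton_subset_iff]
      exact Submodule.mem_span_singleton.mpr ⟨c, hc.symm⟩
    · rw [Submodule.span_le, Set.singleton_subset_iff]
      exact Submodule.mem_span_singleton.mpr ⟨c⁻¹, by rw [hc, smul_smul, inv_mul_cancel₀ hc0, one_smul]⟩
  · exact absurd (simdiag N v z hd e g hev hgz) hnd

/-- An invertible matrix commuting with all `N k` is scalar. -/
lemma commutant_scalar (N : Fin 3 → Matrix (Fin 2) (Fin 2) ℂ)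
    (hnd : ¬ ∃ S : Matrix (Fin 2) (Fin 2) ℂ, IsUnit S ∧ ∀ k, (S⁻¹ * N k * S).IsDiag)
    (hb : ∀ W : Submodule ℂ (Fin 2 → ℂ), W ≠ ⊥ → W ≠ ⊤ →
      (∀ k, ∀ v ∈ W, (N k).mulVec v ∈ W) →
      (∀ W' : Submodule ℂ (Fin 2 → ℂ), W' ≠ ⊥ → W' ≠ ⊤ →
        (∀ k, ∀ v ∈ W', (N k).mulVec v ∈ W') → W' = W) →
      (∃ k : Fin 3, ∃ x y : ℂ, x ≠ y ∧ (N k).charpoly.IsRoot x ∧ (N k).charpoly.IsRoot y))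
    (C2 : Matrix (Fin 2) (Fin 2) ℂ) (hC2 : C2.det ≠ 0)
    (hcomm : ∀ k, C2 * N k = N k * C2) :
    ∃ p : ℂ, p ≠ 0 ∧ C2 = p • (1 : Matrix (Fin 2) (Fin 2) ℂ) := by
  -- eigenvalue of C2
  obtain ⟨ρ, hρ⟩ := quad_root (C2 0 0 + C2 1 1) (C2 0 0 * C2 1 1 - C2 0 1 * C2 1 0)
  set A : Matrix (Fin 2) (Fin 2) ℂ := C2 - ρ • 1 with hA
  have hdetA : A.det = 0 := by
    rw [Matrix.det_fin_two]
    simp [hA, Matrix.one_apply]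
    linear_combination hρ
  obtain ⟨v, hv, hvk⟩ := ker_of_det A hdetA
  by_cases hscal : C2 = ρ • 1
  · refine ⟨ρ, ?_, hscal⟩
    intro h
    rw [hscal, h] at hC2
    simp at hC2
  · have hAne : A ≠ 0 := sub_ne_zero.mpr hscal
    have hcommA : ∀ k, A * N k = N k * A := by
      intro k
      rw [hA, Matrix.sub_mul, Matrix.mul_sub, hcomm k, Matrix.smul_mul, Matrix.mul_smul,
        Matrix.one_mul, Matrix.mul_one]
    -- v is a common eigenvector
    have hev : ∀ k, ∃ e : ℂ, (N k).mulVec v = e • v := by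
      intro k
      have h1 : A.mulVec ((N k).mulVec v) = 0 := by
        rw [Matrix.mulVec_mulVec, hcommA k, ← Matrix.mulVec_mulVec, hvk, Matrix.mulVec_zero]
      exact dep2 v ((N k).mulVec v) hv (ker_line v _ A hAne hvk h1)
    choose e he using hev
    -- the span of v is a nontrivial invariant subspace
    set W : Submodule ℂ (Fin 2 → ℂ) := Submodule.span ℂ {v} with hW
    have hWb : W ≠ ⊥ := by
      intro h
      have hm : v ∈ W := hW ▸ Submodule.mem_span_singleton_self v
      rw [h] at hm
      exact hv ((Submodule.mem_bot ℂ).mp hm)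
    have hWt : W ≠ ⊤ := span_ne_top v hv
    have hWinv : ∀ k, ∀ u ∈ W, (N k).mulVec u ∈ W := by
      intro k u hu
      obtain ⟨c, hc⟩ := Submodule.mem_span_singleton.mp hu
      rw [← hc, Matrix.mulVec_smul, he k]
      exact Submodule.smul_mem _ _ (Submodule.mem_span_singleton.mpr ⟨e k, rfl⟩)
    obtain ⟨k1, x, y, hxy, hx, hy⟩ :=
      hb W hWb hWt hWinv (uniq_line N hnd v hv e he)
    -- basis completion
    obtain ⟨w, hdw⟩ := compl2 v hv
    have hexp : ∀ k, ∃ fk dk : ℂ, (N k).mulVec w = fk • v + dk • w := fun k =>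
      expand2 v w _ hdw
    choose fk dk hNw using hexp
    obtain ⟨q, s, hAw⟩ : ∃ q s : ℂ, A.mulVec w = q • v + s • w := expand2 v w _ hdw
    -- trace and determinant of N k1 via conjugation
    set S : Matrix (Fin 2) (Fin 2) ℂ := !![v 0, w 0; v 1, w 1] with hS
    have hdS : IsUnit S.det := by
      rw [isUnit_iff_ne_zero, Matrix.det_fin_two]
      simp [hS]
      intro h; apply hdw; linear_combination h
    have hNS : N k1 * S = S * !![e k1, fk k1; 0, dk k1] := by
      have h0 := congrFun (he k1) 0
      have h1 := congrFun (he k1) 1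
      have h2 := congrFun (hNw k1) 0
      have h3 := congrFun (hNw k1) 1
      simp [Matrix.mulVec, dotProduct, Fin.sum_univ_two] at h0 h1 h2 h3
      ext i j
      fin_cases i <;> fin_cases j <;> simp [hS, Matrix.mul_apply, Fin.sum_univ_two] <;>
        [linear_combination h0; linear_combination h2; linear_combination h1;
         linear_combination h3]
    have hNeq : N k1 = S * !![e k1, fk k1; 0, dk k1] * S⁻¹ := by
      rw [← hNS, Matrix.mul_assoc, Matrix.mul_nonsing_inv S hdS, Matrix.mul_one]
    have htr : (N k1) 0 0 + (N k1) 1 1 = e k1 + dk k1 := by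
      have h5 : (N k1).trace = (S * !![e k1, fk k1; 0, dk k1] * S⁻¹).trace := by rw [← hNeq]
      rw [Matrix.trace_mul_comm, ← Matrix.mul_assoc, Matrix.nonsing_inv_mul S hdS,
        Matrix.one_mul] at h5
      simpa [Matrix.trace_fin_two] using h5
    have hdet : (N k1) 0 0 * (N k1) 1 1 - (N k1) 0 1 * (N k1) 1 0 = e k1 * dk k1 := by
      have h5 : (N k1).det = (!![e k1, fk k1; 0, dk k1] : Matrix (Fin 2) (Fin 2) ℂ).det := by
        rw [hNeq, Matrix.det_conj ((Matrix.isUnit_iff_isUnit_det S).mpr hdS)]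
      rw [Matrix.det_fin_two, Matrix.det_fin_two_of] at h5
      linear_combination h5
    -- e k1 ≠ dk k1 from the distinct roots
    have hroot1 := charpoly_root (N k1) x hx
    have hroot2 := charpoly_root (N k1) y hy
    rw [htr, hdet] at hroot1 hroot2
    have hedd : e k1 ≠ dk k1 := by
      intro hED
      apply hxy
      rw [hED] at hroot1 hroot2
      have hx' : x = dk k1 := by
        have h4 : (x - dk k1) * (x - dk k1) = 0 := by linear_combination hroot1
        exact sub_eq_zero.mp (mul_self_eq_zero.mp h4)
      have hy' : y = dk k1 := by
        have h4 : (y - dk k1) * (y - dk k1) = 0 := by linear_combination hroot2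
        exact sub_eq_zero.mp (mul_self_eq_zero.mp h4)
      rw [hx', hy']
    -- commutation identity
    have hcid : ∀ k, dk k * q = q * e k + s * fk k := by
      intro k
      have hLR : A.mulVec ((N k).mulVec w) = (N k).mulVec (A.mulVec w) := by
        rw [Matrix.mulVec_mulVec, Matrix.mulVec_mulVec, hcommA k]
      have hL : A.mulVec ((N k).mulVec w) = (dk k * q) • v + (dk k * s) • w := by
        rw [hNw k, Matrix.mulVec_add, Matrix.mulVec_smul, Matrix.mulVec_smul, hvk, hAw]
        module
      have hR : (N k).mulVec (A.mulVec w) = (q * e k + s * fk k) • v + (s * dk k) • w := by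
        rw [hAw, Matrix.mulVec_add, Matrix.mulVec_smul, Matrix.mulVec_smul, he k, hNw k]
        module
      have h7 : (dk k * q) • v + (dk k * s) • w
          = (q * e k + s * fk k) • v + (s * dk k) • w := by rw [← hL, ← hR, hLR]
      have hzero : (dk k * q - (q * e k + s * fk k)) • v
          + (dk k * s - s * dk k) • w = 0 := by
        linear_combination (norm := module) h7
      have h8 := (uniqcoef v w hdw _ _ hzero).1
      linear_combination h8
    -- final case split
    by_cases hs : s = 0
    · -- then q ≠ 0 and e k1 = dk k1, contradiction
      exfalso
      have hq : q ≠ 0 := by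
        intro hq0
        apply hAne
        refine ann_basis v A w hdw hvk ?_
        rw [hAw, hq0, hs]
        module
      have := hcid k1
      rw [hs] at this
      apply hedd
      have h9 : (e k1 - dk k1) * q = 0 := by linear_combination -this
      have := (mul_eq_zero.mp h9).resolve_right hq
      linear_combination this
    · -- second common eigenvector z
      exfalso
      set z : Fin 2 → ℂ := (q / s) • v + w with hzdef
      have hdz : v 0 * z 1 - v 1 * z 0 ≠ 0 := by
        intro h
        apply hdw
        have hz0 : z 0 = q / s * v 0 + w 0 := by simp [hzdef]
        have hz1 : z 1 = q / s * v 1 + w 1 := by simp [hzdef]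
        rw [hz0, hz1] at h
        linear_combination h
      have hez : ∀ k, (N k).mulVec z = dk k • z := by
        intro k
        rw [hzdef, Matrix.mulVec_add, Matrix.mulVec_smul, he k, hNw k]
        match_scalars
        · field_simp
          linear_combination -hcid k
        · ring
      exact hnd (simdiag N v z hdz e dk he hez)



lemma gamma_zero (μ : Fin 3 → ℂ) (N : Fin 3 → Matrix (Fin 2) (Fin 2) ℂ)
    (hnd : ¬ ∃ S : Matrix (Fin 2) (Fin 2) ℂ, IsUnit S ∧ ∀ k, (S⁻¹ * N k * S).IsDiag)
    (hb2 : ∀ W : Submodule ℂ (Fin 2 → ℂ), W ≠ ⊥ → W ≠ ⊤ →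
      (∀ k, ∀ v ∈ W, (N k).mulVec v ∈ W) →
      (∀ W' : Submodule ℂ (Fin 2 → ℂ), W' ≠ ⊥ → W' ≠ ⊤ →
        (∀ k, ∀ v ∈ W', (N k).mulVec v ∈ W') → W' = W) →
      (∀ d : Fin 3 → ℂ, (∀ k, ∀ v : Fin 2 → ℂ, (N k).mulVec v - d k • v ∈ W) →
        ∃ k, μ k ≠ d k))
    (γ : Fin 2 → ℂ) (hγ : ∀ k, Matrix.vecMul γ (N k) = μ k • γ) : γ = 0 := by
  by_contra hg
  set vγ : Fin 2 → ℂ := ![γ 1, -γ 0] with hvγdef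
  have hvγ : vγ ≠ 0 := by
    apply vne
    rcases necomp γ hg with h | h
    · right; simpa [hvγdef] using h
    · left; simpa [hvγdef] using h
  set W : Submodule ℂ (Fin 2 → ℂ) := Submodule.span ℂ {vγ} with hWdef
  have hmem : ∀ u : Fin 2 → ℂ, u ∈ W ↔ γ 0 * u 0 + γ 1 * u 1 = 0 := by
    intro u
    constructor
    · intro hu
      obtain ⟨c, hc⟩ := Submodule.mem_span_singleton.mp (hWdef ▸ hu)
      rw [← hc]
      simp [hvγdef]
      ring
    · intro hu
      obtain ⟨c, hc⟩ := dep2 vγ u hvγ (by simp [hvγdef]; linear_combination hu)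
      exact hWdef ▸ Submodule.mem_span_singleton.mpr ⟨c, hc.symm⟩
  have hrow0 : ∀ k, γ 0 * N k 0 0 + γ 1 * N k 1 0 = μ k * γ 0 := by
    intro k
    have := congrFun (hγ k) 0
    simpa [Matrix.vecMul, dotProduct, Fin.sum_univ_two] using this
  have hrow1 : ∀ k, γ 0 * N k 0 1 + γ 1 * N k 1 1 = μ k * γ 1 := by
    intro k
    have := congrFun (hγ k) 1
    simpa [Matrix.vecMul, dotProduct, Fin.sum_univ_two] using this
  have hNdot : ∀ k (u : Fin 2 → ℂ),
      γ 0 * ((N k).mulVec u) 0 + γ 1 * ((N k).mulVec u) 1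
        = μ k * (γ 0 * u 0 + γ 1 * u 1) := by
    intro k u
    simp [Matrix.mulVec, dotProduct, Fin.sum_univ_two]
    linear_combination u 0 * hrow0 k + u 1 * hrow1 k
  have hWinv : ∀ k, ∀ u ∈ W, (N k).mulVec u ∈ W := by
    intro k u hu
    rw [hmem] at hu ⊢
    rw [hNdot k u, hu, mul_zero]
  have hWb : W ≠ ⊥ := by
    intro h
    have hm : vγ ∈ W := hWdef ▸ Submodule.mem_span_singleton_self vγ
    rw [h] at hm
    exact hvγ ((Submodule.mem_bot ℂ).mp hm)
  have hWt : W ≠ ⊤ := hWdef ▸ span_ne_top vγ hvγ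
  have hev : ∀ k, ∃ e : ℂ, (N k).mulVec vγ = e • vγ := by
    intro k
    have := hWinv k vγ (hWdef ▸ Submodule.mem_span_singleton_self vγ)
    obtain ⟨e, he⟩ := Submodule.mem_span_singleton.mp (hWdef ▸ this)
    exact ⟨e, he.symm⟩
  choose e he using hev
  have huniq := uniq_line N hnd vγ hvγ e he
  have hres := hb2 W hWb hWt hWinv (fun W' h1 h2 h3 => (huniq W' h1 h2 h3).trans hWdef.symm) μ
    (by
      intro k u
      rw [hmem]
      have h1 : ((N k).mulVec u - μ k • u) 0 = ((N k).mulVec u) 0 - μ k * u 0 := by simp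
      have h2 : ((N k).mulVec u - μ k • u) 1 = ((N k).mulVec u) 1 - μ k * u 1 := by simp
      rw [h1, h2]
      linear_combination hNdot k u)
  obtain ⟨k, hk⟩ := hres
  exact hk rfl


end Stmt5Aux

/-- (Proposition 7.6 of the paper.) For `(2,1)`-block upper
triangular `3×3` triples with fixed blocks `M_k^{#}`, `μ_k`, under conditions
(a) and (b), the triples built from `α_k` and `α̃_k` are equivalent iff
`α_k = λ α̃_k + M_k^{#} c − c μ_k` for some `λ ≠ 0` and a column vector `c`. -/
theorem stmt5 (μ : Fin 3 → ℂ) (a a' : Fin 3 → Fin 2 → ℂ)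
    (N : Fin 3 → Matrix (Fin 2) (Fin 2) ℂ)
    (M M' : Fin 3 → Matrix (Fin 3) (Fin 3) ℂ)
    (hM : ∀ k, M k = !![N k 0 0, N k 0 1, a k 0;
                        N k 1 0, N k 1 1, a k 1;
                        0, 0, μ k])
    (hM' : ∀ k, M' k = !![N k 0 0, N k 0 1, a' k 0;
                          N k 1 0, N k 1 1, a' k 1;
                          0, 0, μ k])
    (hnd : ¬ ∃ S : Matrix (Fin 2) (Fin 2) ℂ, IsUnit S ∧ ∀ k, (S⁻¹ * N k * S).IsDiag)
    (hb : ∀ W : Submodule ℂ (Fin 2 → ℂ), W ≠ ⊥ → W ≠ ⊤ →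
      (∀ k, ∀ v ∈ W, (N k).mulVec v ∈ W) →
      (∀ W' : Submodule ℂ (Fin 2 → ℂ), W' ≠ ⊥ → W' ≠ ⊤ →
        (∀ k, ∀ v ∈ W', (N k).mulVec v ∈ W') → W' = W) →
      (∃ k : Fin 3, ∃ x y : ℂ, x ≠ y ∧ (N k).charpoly.IsRoot x ∧ (N k).charpoly.IsRoot y) ∧
      (∀ d : Fin 3 → ℂ, (∀ k, ∀ v : Fin 2 → ℂ, (N k).mulVec v - d k • v ∈ W) →
        ∃ k, μ k ≠ d k)) :
    (∃ C : Matrix (Fin 3) (Fin 3) ℂ, IsUnit C ∧ ∀ k, M' k = C⁻¹ * M k * C) ↔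
      ∃ lam : ℂ, lam ≠ 0 ∧ ∃ c : Fin 2 → ℂ,
        ∀ k, a k = lam • a' k + (N k).mulVec c - μ k • c := by
  constructor
  · rintro ⟨C, hC, hCe⟩
    have hdC : IsUnit C.det := (Matrix.isUnit_iff_isUnit_det C).mp hC
    have hXC : ∀ k, M k * C = C * M' k := by
      intro k
      rw [hCe k, ← Matrix.mul_assoc, ← Matrix.mul_assoc,
        Matrix.mul_nonsing_inv C hdC, Matrix.one_mul]
    have hγ : (![C 2 0, C 2 1] : Fin 2 → ℂ) = 0 := by
      apply Stmt5Aux.gamma_zero μ N hnd (fun W h1 h2 h3 h4 => (hb W h1 h2 h3 h4).2)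
      intro k
      funext j
      fin_cases j
      · have := congrFun (congrFun (hXC k) 2) 0
        simp [hM, hM', Matrix.mul_apply, Fin.sum_univ_three] at this
        simp [Matrix.vecMul, dotProduct, Fin.sum_univ_two]
        linear_combination -this
      · have := congrFun (congrFun (hXC k) 2) 1
        simp [hM, hM', Matrix.mul_apply, Fin.sum_univ_three] at this
        simp [Matrix.vecMul, dotProduct, Fin.sum_univ_two]
        linear_combination -this
    have hγ0 : C 2 0 = 0 := by have := congrFun hγ 0; simpa using this
    have hγ1 : C 2 1 = 0 := by have := congrFun hγ 1; simpa using this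
    have hdet3 : C.det = (C 0 0 * C 1 1 - C 0 1 * C 1 0) * C 2 2 := by
      rw [Matrix.det_fin_three, hγ0, hγ1]; ring
    have hdCne : C.det ≠ 0 := hdC.ne_zero
    rw [hdet3] at hdCne
    have hdet2 : C 0 0 * C 1 1 - C 0 1 * C 1 0 ≠ 0 := fun h => hdCne (by rw [h, zero_mul])
    have hδ : C 2 2 ≠ 0 := fun h => hdCne (by rw [h, mul_zero])
    set C2 : Matrix (Fin 2) (Fin 2) ℂ := !![C 0 0, C 0 1; C 1 0, C 1 1] with hC2def
    have hC2det : C2.det ≠ 0 := by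
      rw [Matrix.det_fin_two_of]; exact hdet2
    have hcomm : ∀ k, C2 * N k = N k * C2 := by
      intro k
      ext i j
      have e00 := congrFun (congrFun (hXC k) 0) 0
      have e01 := congrFun (congrFun (hXC k) 0) 1
      have e10 := congrFun (congrFun (hXC k) 1) 0
      have e11 := congrFun (congrFun (hXC k) 1) 1
      simp [hM, hM', Matrix.mul_apply, Fin.sum_univ_three, hγ0, hγ1] at e00 e01 e10 e11
      fin_cases i <;> fin_cases j <;>
        simp [hC2def, Matrix.mul_apply, Fin.sum_univ_two] <;>
        [linear_combination -e00; linear_combination -e01;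
         linear_combination -e10; linear_combination -e11]
    obtain ⟨p, hp, hpeq⟩ := Stmt5Aux.commutant_scalar N hnd
      (fun W h1 h2 h3 h4 => (hb W h1 h2 h3 h4).1) C2 hC2det hcomm
    have hp00 : C 0 0 = p := by
      have := congrFun (congrFun hpeq 0) 0; simpa [hC2def, Matrix.one_apply] using this
    have hp01 : C 0 1 = 0 := by
      have := congrFun (congrFun hpeq 0) 1; simpa [hC2def, Matrix.one_apply] using this
    have hp10 : C 1 0 = 0 := by
      have := congrFun (congrFun hpeq 1) 0; simpa [hC2def, Matrix.one_apply] using this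
    have hp11 : C 1 1 = p := by
      have := congrFun (congrFun hpeq 1) 1; simpa [hC2def, Matrix.one_apply] using this
    refine ⟨p / C 2 2, div_ne_zero hp hδ,
      ![-(C 0 2) / C 2 2, -(C 1 2) / C 2 2], fun k => ?_⟩
    have e02 := congrFun (congrFun (hXC k) 0) 2
    have e12 := congrFun (congrFun (hXC k) 1) 2
    simp [hM, hM', Matrix.mul_apply, Fin.sum_univ_three, hp00, hp01, hp10, hp11] at e02 e12
    funext i
    fin_cases i <;>
      simp [Matrix.mulVec, dotProduct, Fin.sum_univ_two, Matrix.vecHead, Matrix.vecTail] <;>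
      field_simp <;>
      [linear_combination e02; linear_combination e12]
  · rintro ⟨lam, hlam, c, hc⟩
    set C : Matrix (Fin 3) (Fin 3) ℂ := !![lam, 0, -(c 0); 0, lam, -(c 1); 0, 0, 1] with hCdef
    have hdC : IsUnit C.det := by
      rw [isUnit_iff_ne_zero, Matrix.det_fin_three]
      simp [hCdef, Matrix.vecHead, Matrix.vecTail]
      exact hlam
    refine ⟨C, (Matrix.isUnit_iff_isUnit_det C).mpr hdC, fun k => ?_⟩
    have key : C * M' k = M k * C := by
      have hc0 := congrFun (hc k) 0
      have hc1 := congrFun (hc k) 1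
      simp [Matrix.mulVec, dotProduct, Fin.sum_univ_two, Matrix.vecHead, Matrix.vecTail] at hc0 hc1
      ext i j
      fin_cases i <;> fin_cases j <;>
        simp [hCdef, hM, hM', Matrix.mul_apply, Fin.sum_univ_three,
          Matrix.vecHead, Matrix.vecTail] <;>
        first
          | ring1
          | linear_combination hc0
          | linear_combination -hc0
          | linear_combination hc1
          | linear_combination -hc1
    have hQ : C⁻¹ * (C * M' k) = M' k := by
      rw [← Matrix.mul_assoc, Matrix.nonsing_inv_mul C hdC, Matrix.one_mul]
    rw [← hQ, key, ← Matrix.mul_assoc]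
end

section
/- Let n ≥ 1, let U ⊆ ℂ be a nonempty open connected set, let z_0 ∈ U, let A : U → M_n(ℂ) be analytic on U (complex differentiable at every point of U), and let Y : U → M_n(ℂ) satisfy: Y has complex derivative A(z)·Y(z) at every z ∈ U, and Y(z_0) = I. If X is a ℂ-linear subspace of ℂ^n such that A(z)·v ∈ X for every z ∈ U and every v ∈ X, then Y(z)·v ∈ X for every z ∈ U and every v ∈ X. -/
open Set Metric

/-- Quotient norm bound: if `T` preserves `X`, the induced map on the quotient has
norm at most `‖T‖`. -/
lemma quotBound {m : ℕ} (X : Submodule ℂ (Fin m → ℂ)) (T : (Fin m → ℂ) →L[ℂ] (Fin m → ℂ))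
    (hT : ∀ u ∈ X, T u ∈ X) (x : Fin m → ℂ) :
    ‖(Submodule.Quotient.mk (T x) : (Fin m → ℂ) ⧸ X)‖
      ≤ ‖T‖ * ‖(Submodule.Quotient.mk x : (Fin m → ℂ) ⧸ X)‖ := by
  refine le_of_forall_pos_le_add fun ε hε => ?_
  have hδ : 0 < ε / (‖T‖ + 1) := by positivity
  obtain ⟨a, ha, hna⟩ :=
    Submodule.Quotient.norm_mk_lt (Submodule.Quotient.mk x : (Fin m → ℂ) ⧸ X) hδ
  have hax : a - x ∈ X := (Submodule.Quotient.eq X).mp ha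
  have h1 : (Submodule.Quotient.mk (T a) : (Fin m → ℂ) ⧸ X) = Submodule.Quotient.mk (T x) := by
    rw [Submodule.Quotient.eq]
    have := hT _ hax
    rwa [map_sub] at this
  have hTle : ‖T a‖ ≤ ‖T‖ * ‖a‖ := T.le_opNorm a
  have hmk : ‖(Submodule.Quotient.mk (T a) : (Fin m → ℂ) ⧸ X)‖ ≤ ‖T a‖ :=
    Submodule.Quotient.norm_mk_le X (T a)
  have hTnn : (0:ℝ) ≤ ‖T‖ := norm_nonneg _
  have key : ‖T‖ * (ε / (‖T‖ + 1)) ≤ ε := by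
    have h2 : ‖T‖ * (ε / (‖T‖ + 1)) = ‖T‖ * ε / (‖T‖ + 1) := by ring
    rw [h2, div_le_iff₀ (by positivity : (0:ℝ) < ‖T‖ + 1)]
    nlinarith
  calc ‖(Submodule.Quotient.mk (T x) : (Fin m → ℂ) ⧸ X)‖
      = ‖(Submodule.Quotient.mk (T a) : (Fin m → ℂ) ⧸ X)‖ := by rw [h1]
    _ ≤ ‖T a‖ := hmk
    _ ≤ ‖T‖ * ‖a‖ := hTle
    _ ≤ ‖T‖ * (‖(Submodule.Quotient.mk x : (Fin m → ℂ) ⧸ X)‖ + ε / (‖T‖ + 1)) :=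
        mul_le_mul_of_nonneg_left hna.le hTnn
    _ ≤ ‖T‖ * ‖(Submodule.Quotient.mk x : (Fin m → ℂ) ⧸ X)‖ + ε := by
        rw [mul_add]
        exact add_le_add le_rfl key

/-- Entrywise derivatives give a derivative of `mulVec`. -/
lemma hasDerivAt_mulVec {m : ℕ} {Y : ℂ → Matrix (Fin m) (Fin m) ℂ}
    {M : Matrix (Fin m) (Fin m) ℂ} {z : ℂ} (v : Fin m → ℂ)
    (h : ∀ i j, HasDerivAt (fun w => Y w i j) (M i j) z) :
    HasDerivAt (fun w => (Y w).mulVec v) (M.mulVec v) z := by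
  rw [hasDerivAt_pi]
  intro i
  simp only [Matrix.mulVec, dotProduct]
  exact HasDerivAt.fun_sum fun j _ => (h i j).mul_const (v j)

/-- (Lemma 5.1 of the paper.) If `Y' = A(z)Y` on an open
connected set `U`, `Y(z₀) = I`, and the subspace `X` is invariant under every
`A(z)`, then `X` is invariant under every `Y(z)`. Derivatives of matrix-valued
functions are taken entrywise. -/
theorem stmt8 (n : ℕ) (hn : 1 ≤ n) (U : Set ℂ) (hU : IsOpen U) (hUc : IsConnected U)
    (z₀ : ℂ) (hz₀ : z₀ ∈ U)
    (A Y : ℂ → Matrix (Fin n) (Fin n) ℂ)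
    (hA : ∀ z ∈ U, ∀ i j, DifferentiableAt ℂ (fun w => A w i j) z)
    (hY : ∀ z ∈ U, ∀ i j, HasDerivAt (fun w => Y w i j) ((A z * Y z) i j) z)
    (hY₀ : Y z₀ = 1)
    (X : Submodule ℂ (Fin n → ℂ))
    (hAX : ∀ z ∈ U, ∀ v ∈ X, (A z).mulVec v ∈ X) :
    ∀ z ∈ U, ∀ v ∈ X, (Y z).mulVec v ∈ X := by
  haveI hXc : IsClosed (X : Set (Fin n → ℂ)) := X.closed_of_finiteDimensional
  -- the continuous linear quotient map
  set πC : (Fin n → ℂ) →L[ℂ] ((Fin n → ℂ) ⧸ X) := LinearMap.toContinuousLinearMap X.mkQ with hπC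
  have hπCapp : ∀ x : Fin n → ℂ, πC x = Submodule.Quotient.mk x := fun x => rfl
  -- derivative of z ↦ Y z *ᵥ v
  have hYd : ∀ z ∈ U, ∀ v : Fin n → ℂ,
      HasDerivAt (fun w => (Y w).mulVec v) ((A z).mulVec ((Y z).mulVec v)) z := by
    intro z hz v
    have := hasDerivAt_mulVec (M := A z * Y z) v (hY z hz)
    rw [Matrix.mulVec_mulVec]
    exact this
  -- continuity of Y mulvec
  have hYc : ∀ z ∈ U, ∀ v : Fin n → ℂ, ContinuousAt (fun w => (Y w).mulVec v) z :=
    fun z hz v => (hYd z hz v).continuousAt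
  -- continuity of A as a matrix-valued function
  have hAc : ∀ z ∈ U, ContinuousAt A z := by
    intro z hz
    refine continuousAt_pi.mpr ?_
    intro i
    rw [continuousAt_pi]
    intro j
    exact (hA z hz i j).continuousAt
  -- the CLM-valued version of A
  set matCLM : Matrix (Fin n) (Fin n) ℂ →ₗ[ℂ] ((Fin n → ℂ) →L[ℂ] (Fin n → ℂ)) :=
    (LinearMap.toContinuousLinearMap.toLinearMap).comp Matrix.toLin'.toLinearMap with hmatCLM
  have hmatCLMc : Continuous matCLM := matCLM.continuous_of_finiteDimensional
  have hmatapp : ∀ (M : Matrix (Fin n) (Fin n) ℂ) (x : Fin n → ℂ),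
      matCLM M x = M.mulVec x := fun M x => by
    simp [hmatCLM, Matrix.toLin'_apply]
  -- the good set
  set S : Set ℂ := {z | z ∈ U ∧ ∀ v ∈ X, (Y z).mulVec v ∈ X} with hS
  have hz₀S : z₀ ∈ S := by
    refine ⟨hz₀, fun v hv => ?_⟩
    rw [hY₀, Matrix.one_mulVec]
    exact hv
  -- S is open
  have hSopen : IsOpen S := by
    rw [Metric.isOpen_iff]
    rintro z₁ ⟨hz₁U, hz₁X⟩
    obtain ⟨r, hr, hball⟩ := Metric.isOpen_iff.mp hU z₁ hz₁U
    refine ⟨r, hr, fun z hzball => ?_⟩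
    have hzU : z ∈ U := hball hzball
    refine ⟨hzU, fun v hv => ?_⟩
    -- Gronwall along the segment from z₁ to z
    set d : ℂ := z - z₁ with hd
    set γ : ℝ → ℂ := fun t => z₁ + t • d with hγ
    have hγmem : ∀ t ∈ Icc (0:ℝ) 1, γ t ∈ ball z₁ r := by
      intro t ht
      simp only [hγ, mem_ball, dist_eq_norm, add_sub_cancel_left]
      calc ‖t • d‖ = |t| * ‖d‖ := by rw [norm_smul, Real.norm_eq_abs]
        _ ≤ 1 * ‖d‖ := by
            apply mul_le_mul_of_nonneg_right _ (norm_nonneg d)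
            rw [abs_of_nonneg ht.1]; exact ht.2
        _ = ‖d‖ := one_mul _
        _ < r := by rw [hd, ← dist_eq_norm]; exact mem_ball.mp hzball
    have hγU : ∀ t ∈ Icc (0:ℝ) 1, γ t ∈ U := fun t ht => hball (hγmem t ht)
    have hγcont : Continuous γ := by fun_prop
    have hγderiv : ∀ t : ℝ, HasDerivAt γ d t := by
      intro t
      have : HasDerivAt (fun s : ℝ => s • d) ((1:ℝ) • d) t := (hasDerivAt_id t).smul_const d
      simpa [hγ] using this.const_add z₁
    -- bound on the segment
    obtain ⟨t₀, _, hC⟩ : ∃ t₀ ∈ Icc (0:ℝ) 1, ∀ t ∈ Icc (0:ℝ) 1,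
        ‖matCLM (A (γ t))‖ ≤ ‖matCLM (A (γ t₀))‖ := by
      obtain ⟨t₀, ht₀, hmax⟩ := isCompact_Icc.exists_isMaxOn (s := Icc (0:ℝ) 1)
        ⟨0, le_refl 0, zero_le_one⟩ (f := fun t => ‖matCLM (A (γ t))‖) (by
          intro t ht
          exact ((hmatCLMc.continuousAt.comp ((hAc (γ t) (hγU t ht)).comp
            hγcont.continuousAt)).norm).continuousWithinAt)
      exact ⟨t₀, ht₀, fun t ht => hmax ht⟩
    set C : ℝ := ‖matCLM (A (γ t₀))‖ with hCdef
    have hCnn : (0:ℝ) ≤ C := norm_nonneg _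
    -- the quotient-valued function
    set g : ℝ → ((Fin n → ℂ) ⧸ X) := fun t => πC ((Y (γ t)).mulVec v) with hg
    have hgderiv : ∀ t ∈ Icc (0:ℝ) 1,
        HasDerivAt g (d • πC ((A (γ t)).mulVec ((Y (γ t)).mulVec v))) t := by
      intro t ht
      have h1 : HasDerivAt (fun w => (Y w).mulVec v)
          ((A (γ t)).mulVec ((Y (γ t)).mulVec v)) (γ t) := hYd (γ t) (hγU t ht) v
      have h2 : HasDerivAt (fun s => (Y (γ s)).mulVec v)
          (d • (A (γ t)).mulVec ((Y (γ t)).mulVec v)) t := h1.scomp t (hγderiv t)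
      have h3 := ((πC.restrictScalars ℝ).hasFDerivAt.comp_hasDerivAt t h2)
      simp [hg, Function.comp, map_smul] at h3 ⊢
      exact h3
    have hgcont : ContinuousOn g (Icc 0 1) := by
      intro t ht
      exact ((hgderiv t ht).continuousAt).continuousWithinAt
    have hbound : ∀ t ∈ Ico (0:ℝ) 1,
        ‖d • πC ((A (γ t)).mulVec ((Y (γ t)).mulVec v))‖ ≤ (‖d‖ * C) * ‖g t‖ + 0 := by
      intro t ht
      have ht' : t ∈ Icc (0:ℝ) 1 := ⟨ht.1, ht.2.le⟩
      have hAXt : ∀ u ∈ X, matCLM (A (γ t)) u ∈ X := by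
        intro u hu
        rw [hmatapp]
        exact hAX (γ t) (hγU t ht') u hu
      have hq : ‖(Submodule.Quotient.mk ((A (γ t)).mulVec ((Y (γ t)).mulVec v))
            : (Fin n → ℂ) ⧸ X)‖
          ≤ ‖matCLM (A (γ t))‖ *
            ‖(Submodule.Quotient.mk ((Y (γ t)).mulVec v) : (Fin n → ℂ) ⧸ X)‖ := by
        have := quotBound X (matCLM (A (γ t))) hAXt ((Y (γ t)).mulVec v)
        rwa [hmatapp] at this
      rw [add_zero]
      have hsm : ‖d • πC ((A (γ t)).mulVec ((Y (γ t)).mulVec v))‖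
          ≤ ‖d‖ * ‖πC ((A (γ t)).mulVec ((Y (γ t)).mulVec v))‖ :=
        norm_smul_le (β := (Fin n → ℂ) ⧸ X) d (πC ((A (γ t)).mulVec ((Y (γ t)).mulVec v)))
      refine le_trans hsm ?_
      calc ‖d‖ * ‖πC ((A (γ t)).mulVec ((Y (γ t)).mulVec v))‖
          ≤ ‖d‖ * (‖matCLM (A (γ t))‖ * ‖g t‖) := by
            apply mul_le_mul_of_nonneg_left _ (norm_nonneg d)
            simp only [hg, hπCapp]
            exact hq
        _ ≤ ‖d‖ * (C * ‖g t‖) := by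
            apply mul_le_mul_of_nonneg_left _ (norm_nonneg d)
            exact mul_le_mul_of_nonneg_right (hC t ht') (norm_nonneg _)
        _ = (‖d‖ * C) * ‖g t‖ := by ring
    have hg0 : ‖g 0‖ ≤ 0 := by
      have : γ 0 = z₁ := by simp [hγ]
      have hmem : (Y z₁).mulVec v ∈ X := hz₁X v hv
      have : g 0 = 0 := by
        rw [hg]; simp only [this, hπCapp]
        rwa [Submodule.Quotient.mk_eq_zero]
      rw [this, norm_zero]
    have := norm_le_gronwallBound_of_norm_deriv_right_le hgcont
      (fun t ht => (hgderiv t ⟨ht.1, ht.2.le⟩).hasDerivWithinAt) hg0 hbound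
    have h1 : ‖g 1‖ ≤ 0 := by
      have := this 1 ⟨zero_le_one, le_refl 1⟩
      rwa [gronwallBound_ε0_δ0] at this
    have hg1 : g 1 = 0 := norm_le_zero_iff.mp h1
    have hγ1 : γ 1 = z := by simp [hγ, hd]
    simp only [hg] at hg1
    rw [hγ1, hπCapp, Submodule.Quotient.mk_eq_zero] at hg1
    exact hg1
  -- U \ S is open
  have hTopen : IsOpen (U \ S) := by
    rw [isOpen_iff_mem_nhds]
    rintro z ⟨hzU, hzS⟩
    simp only [hS, mem_setOf_eq, not_and, not_forall] at hzS
    obtain ⟨v, hv, hnot⟩ := hzS hzU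
    have hcont : ContinuousAt (fun w => (Y w).mulVec v) z := hYc z hzU v
    have hX : (Y z).mulVec v ∈ (X : Set (Fin n → ℂ))ᶜ := hnot
    have hev : ∀ᶠ w in nhds z, (Y w).mulVec v ∈ (X : Set (Fin n → ℂ))ᶜ :=
      hcont.eventually_mem (hXc.isOpen_compl.mem_nhds hX)
    have hevU : ∀ᶠ w in nhds z, w ∈ U := hU.mem_nhds hzU
    filter_upwards [hev, hevU] with w hw hwU
    exact ⟨hwU, fun hwS => hw (hwS.2 v hv)⟩
  -- connectedness
  have hsub : U ⊆ S := by
    apply hUc.isPreconnected.subset_left_of_subset_union hSopen hTopen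
    · exact Set.disjoint_left.mpr fun a haS haT => haT.2 haS
    · intro z hz
      by_cases h : z ∈ S
      · exact Or.inl h
      · exact Or.inr ⟨hz, h⟩
    · exact ⟨z₀, hz₀, hz₀S⟩
  intro z hz v hv
  exact (hsub hz).2 v hv
end

section
/- Let m ≥ 2, n ≥ 2, let a_1,…,a_m ∈ ℂ be distinct points, and let κ_1 ≥ κ_2 ≥ ⋯ ≥ κ_n be integers. For 1 ≤ i,j ≤ n let p_{ij} be a complex polynomial with deg p_{ij} ≤ m − 2 + κ_i − κ_j, where p_{ij} is the zero polynomial whenever m − 2 + κ_i − κ_j < 0. For z ∈ ℂ \ {a_1,…,a_m} define the matrix A(z) ∈ M_n(ℂ) with entries A(z)_{ij} = (κ_i δ_{ij} z^{m−1} + p_{ij}(z)) / ((z−a_1)(z−a_2)⋯(z−a_m)), where δ_{ij} is the Kronecker symbol. If κ_k − κ_{k+1} > m − 2 for some 1 ≤ k ≤ n−1, then for every z ∈ ℂ \ {a_1,…,a_m} the subspace X = span{e_1,…,e_k} of ℂ^n (spanned by the first k standard basis vectors) satisfies A(z)·v ∈ X for every v ∈ X; in particular, the collection {A(z) : z ∈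 ℂ \ {a_1,…,a_m}} is reducible. -/
/-!
Once `κ_k - κ_{k+1} > m - 2`, monotonicity gives `m - 2 + κ_i - κ_j < 0` for all `i > k ≥ j`, so the
degree bound forces `p_{ij} = 0` there; as `i ≠ j`, the entry `A(z)_{ij}` vanishes. Thus every `A(z)`
is block upper triangular for the splitting after the first `k` coordinates.
-/

open scoped Matrix

section SpanSingle

variable {ι R : Type*} [DecidableEq ι] [Semiring R]

theorem mem_span_single_one_iff [Fintype ι] {s : Set ι} {v : ι → R} :
    v ∈ Submodule.span R {w | ∃ i ∈ s, w = Pi.single i 1} ↔ ∀ i ∉ s, v i = 0 := by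
  have hset : {w : ι → R | ∃ i ∈ s, w = Pi.single i 1} = Pi.basisFun R ι '' s := by
    ext w
    simp [eq_comm]
  rw [hset, Module.Basis.mem_span_image]
  simp only [Set.subset_def, Finset.mem_coe, Finsupp.mem_support_iff, Pi.basisFun_repr]
  exact forall_congr' fun _ => not_imp_comm

theorem Matrix.mulVec_mem_span_single_one [Fintype ι] {s : Set ι} {M : Matrix ι ι R}
    (hM : ∀ i ∉ s, ∀ j ∈ s, M i j = 0) {v : ι → R}
    (hv : v ∈ Submodule.span R {w | ∃ i ∈ s, w = Pi.single i 1}) :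
    M *ᵥ v ∈ Submodule.span R {w | ∃ i ∈ s, w = Pi.single i 1} := by
  rw [mem_span_single_one_iff] at hv ⊢
  intro i hi
  refine Finset.sum_eq_zero fun j _ => ?_
  by_cases hj : j ∈ s
  · exact mul_eq_zero_of_left (hM i hi j hj) _
  · exact mul_eq_zero_of_right _ (hv j hj)

theorem span_single_one_ne_bot [Nontrivial R] {s : Set ι} (hs : s.Nonempty) :
    Submodule.span R {w : ι → R | ∃ i ∈ s, w = Pi.single i 1} ≠ ⊥ := by
  obtain ⟨i, hi⟩ := hs
  refine (Submodule.ne_bot_iff _).2 ⟨Pi.single i 1, Submodule.subset_span ⟨i, hi, rfl⟩, ?_⟩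
  simp

theorem span_single_one_ne_top [Fintype ι] [Nontrivial R] {s : Set ι} (hs : s ≠ Set.univ) :
    Submodule.span R {w : ι → R | ∃ i ∈ s, w = Pi.single i 1} ≠ ⊤ := by
  obtain ⟨i, hi⟩ := (Set.ne_univ_iff_exists_notMem s).1 hs
  rw [Ne, Submodule.eq_top_iff', not_forall]
  exact ⟨Pi.single i 1, fun h => by simpa using mem_span_single_one_iff.1 h i hi⟩

end SpanSingle

/-- (From Theorem 5.2 of the paper.) For a matrix `A(z)` of
the standard form determined by singularities `a_1,…,a_m`, decreasing indices
`κ_1 ≥ ⋯ ≥ κ_n` and polynomials `p_{ij}` of degree at most `m−2+κ_i−κ_j`, if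
`κ_k − κ_{k+1} > m−2` for some `k`, then the span of the first `k` standard
basis vectors is invariant under every `A(z)`; in particular the family
`{A(z)}` is reducible. -/
theorem stmt9 (m n : ℕ)
    (a : Fin m → ℂ)
    (κ : Fin n → ℤ) (hκ : ∀ i j : Fin n, i ≤ j → κ j ≤ κ i)
    (p : Fin n → Fin n → Polynomial ℂ)
    (hp : ∀ i j, ∀ d : ℕ, (m : ℤ) - 2 + κ i - κ j < (d : ℤ) → (p i j).coeff d = 0)
    (A : ℂ → Matrix (Fin n) (Fin n) ℂ)
    (hA : ∀ z, A z = Matrix.of fun i j =>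
      ((if i = j then (κ i : ℂ) else 0) * z ^ (m - 1) + (p i j).eval z) / ∏ l, (z - a l))
    (k : ℕ) (hk : k + 1 < n)
    (hgap : (m : ℤ) - 2 < κ ⟨k, by omega⟩ - κ ⟨k + 1, hk⟩)
    (X : Submodule ℂ (Fin n → ℂ))
    (hX : X = Submodule.span ℂ
      {v : Fin n → ℂ | ∃ i : Fin n, (i : ℕ) ≤ k ∧ v = Pi.single i 1}) :
    (∀ z : ℂ, (∀ l, z ≠ a l) → ∀ v ∈ X, (A z).mulVec v ∈ X) ∧ X ≠ ⊥ ∧ X ≠ ⊤ := by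
  set s : Set (Fin n) := {i | (i : ℕ) ≤ k}
  change X = Submodule.span ℂ {v | ∃ i ∈ s, v = Pi.single i 1} at hX
  subst hX
  have hlower : ∀ z, ∀ i ∉ s, ∀ j ∈ s, A z i j = 0 := by
    intro z i hi j hj
    have hij : i ≠ j := by rintro rfl; exact hi hj
    have hκi : κ i ≤ κ ⟨k + 1, hk⟩ := hκ _ _ (Fin.le_def.2 (Nat.lt_of_not_le hi))
    have hκj : κ ⟨k, by omega⟩ ≤ κ j := hκ _ _ (Fin.le_def.2 hj)
    have hpij : p i j = 0 :=
      Polynomial.ext fun d => (hp i j d (by omega)).trans (Polynomial.coeff_zero d).symm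
    simp [hA, hij, hpij]
  refine ⟨fun z _ v hv => Matrix.mulVec_mem_span_single_one (hlower z) hv,
    span_single_one_ne_bot ⟨⟨0, by omega⟩, Nat.zero_le k⟩,
    span_single_one_ne_top <|
      (Set.ne_univ_iff_exists_notMem s).2 ⟨⟨k + 1, hk⟩, Nat.not_succ_le_self k⟩⟩
end

section
/- Let E be an n×n complex matrix that is non-resonant, i.e., the difference of any two eigenvalues of E is not a nonzero integer. Then there exists a polynomial q ∈ ℂ[X] such that q(exp(2πi·E)) = E, where exp denotes the matrix exponential. In particular, every n×n complex matrix that commutes with exp(2πi·E) also commutes with E. -/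
/-!
Let `E` be annihilated by `∏ (X - a) ^ m a` with the roots `a` distinct, and `c = 2πi`. The
Chinese remainder theorem gives spectral projections `P a`, polynomials in `E`, with
`∑ P a = 1` and `(E - a) ^ m a * P a = 0`. On the range of `P a` the exponential series of
`c • E` is `exp (c a)` times a finite sum, so `exp (c • E) = h(E)` for a polynomial `h` that
agrees with `z ↦ exp (c z)` to order `m a` at every root. In particular `h(a) = exp (c a)` and
`h'(a) = c exp (c a) ≠ 0`. Non-resonance says exactly that `h` is injective on the roots, so
the local polynomial inverses of `h` near each root (modulo `(X - h(a)) ^ m a`) glue, again by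
the Chinese remainder theorem, to a single `q` with `q ∘ h ≡ X` modulo every `(X - a) ^ m a`.
Hence `q (exp (c • E)) = (q ∘ h)(E) = E`.
-/

open Polynomial NormedSpace Function
open scoped Nat

theorem exists_forall_dvd_sub {ι R : Type*} [CommRing R] {s : Finset ι} {t : ι → R}
    (ht : (s : Set ι).Pairwise (IsCoprime on t)) (v : ι → R) :
    ∃ g, ∀ i ∈ s, t i ∣ g - v i := by
  obtain ⟨g, hg⟩ := Ideal.exists_forall_sub_mem_ideal (ι := s) (I := fun i => Ideal.span {t i})
    (fun i j hij => (Ideal.isCoprime_span_singleton_iff _ _).2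
      (ht i.2 j.2 (Subtype.coe_ne_coe.2 hij))) (fun i => v i)
  exact ⟨g, fun i hi => Ideal.mem_span_singleton.1 (hg ⟨i, hi⟩)⟩

namespace Polynomial

variable {K : Type*} [Field K]

theorem exists_comp_sub_X_dvd_X_pow {h : K[X]} (h0 : h.coeff 0 = 0) (h1 : h.coeff 1 ≠ 0)
    (m : ℕ) : ∃ g : K[X], X ^ m ∣ g.comp h - X := by
  obtain ⟨u, rfl⟩ : X ∣ h := X_dvd_iff.mpr h0
  rw [coeff_X_mul] at h1
  induction m with
  | zero => exact ⟨0, by simp⟩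
  | succ m ih =>
    obtain ⟨g, w, hw⟩ := ih
    -- `b` cancels the lowest-order term `w(0) X ^ m` of the error `g ∘ h - X`.
    set b := w.coeff 0 / u.coeff 0 ^ m
    refine ⟨g - C b * X ^ m, ?_⟩
    have hcomp : (g - C b * X ^ m).comp (X * u) - X = X ^ m * (w - C b * u ^ m) := by
      rw [sub_comp, mul_comp, C_comp, X_pow_comp, mul_pow]
      linear_combination hw
    rw [hcomp, pow_succ]
    refine mul_dvd_mul_left _ (X_dvd_iff.mpr ?_)
    have hu : (u ^ m).coeff 0 = u.coeff 0 ^ m := by simp [coeff_zero_eq_eval_zero]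
    rw [coeff_sub, coeff_C_mul, hu, div_mul_cancel₀ _ (pow_ne_zero _ h1), sub_self]

theorem exists_comp_sub_X_dvd {h : K[X]} {a : K} (ha : h.derivative.eval a ≠ 0) (m : ℕ) :
    ∃ g : K[X], (X - C a) ^ m ∣ g.comp h - X := by
  obtain ⟨g₀, hg₀⟩ := exists_comp_sub_X_dvd_X_pow (h := taylor a h - C (h.eval a))
    (by simp [taylor_coeff_zero]) (by simpa [taylor_coeff_one] using ha) m
  refine ⟨C a + g₀.comp (X - C (h.eval a)), ?_⟩
  convert _root_.map_dvd (compRingHom (X - C a)) hg₀ using 1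
  · simp
  · simp only [coe_compRingHom_apply, sub_comp, add_comp, C_comp, X_comp, comp_assoc,
      taylor_apply]
    simp
    ring

theorem pairwise_isCoprime_X_sub_C_pow {s : Finset K} {f : K → K} (hf : Set.InjOn f s)
    (m : K → ℕ) : (s : Set K).Pairwise (IsCoprime on fun a => (X - C (f a)) ^ m a) :=
  fun _ ha _ hb hab => (isCoprime_X_sub_C_of_isUnit_sub
    (sub_ne_zero.2 fun h => hab (hf ha hb h)).isUnit).pow

theorem exists_comp_sub_X_dvd_of_injOn {h : K[X]} {s : Finset K} (hinj : Set.InjOn h.eval s)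
    (hder : ∀ a ∈ s, h.derivative.eval a ≠ 0) (m : K → ℕ) :
    ∃ q : K[X], ∀ a ∈ s, (X - C a) ^ m a ∣ q.comp h - X := by
  choose! g hg using fun a (ha : a ∈ s) => exists_comp_sub_X_dvd (hder a ha) (m a)
  obtain ⟨q, hq⟩ := exists_forall_dvd_sub (pairwise_isCoprime_X_sub_C_pow hinj m) g
  refine ⟨q, fun a ha => ?_⟩
  have hqa : (X - C a) ^ m a ∣ (q - g a).comp h :=
    (pow_dvd_pow_of_dvd X_sub_C_dvd_sub_C_eval _).trans
      (by simpa using _root_.map_dvd (compRingHom h) (hq a ha))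
  simpa [sub_comp] using dvd_add hqa (hg a ha)

theorem eval_eq_and_derivative_eval_eq_of_sq_dvd_sub {f g : K[X]} {a : K}
    (h : (X - C a) ^ 2 ∣ f - g) :
    f.eval a = g.eval a ∧ f.derivative.eval a = g.derivative.eval a := by
  obtain ⟨w, hw⟩ := h
  rw [sub_eq_iff_eq_add] at hw
  subst hw
  simp [derivative_mul, derivative_pow]

variable {ι R : Type*} [Ring R] [Algebra K R]

theorem aeval_mul_eq_of_dvd_sub {x y : R} {d f g : K[X]} (hd : d ∣ f - g)
    (hy : aeval x d * y = 0) :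
    aeval x f * y = aeval x g * y := by
  obtain ⟨w, hw⟩ := hd
  rw [← sub_eq_zero, ← sub_mul, ← map_sub, hw, mul_comm, map_mul, mul_assoc, hy, mul_zero]

theorem exists_sum_aeval_eq_one {x : R} {s : Finset ι} {t : ι → K[X]}
    (ht : (s : Set ι).Pairwise (IsCoprime on t)) (hx : aeval x (∏ i ∈ s, t i) = 0) :
    ∃ f : ι → K[X],
      ∑ i ∈ s, aeval x (f i) = 1 ∧ ∀ i ∈ s, aeval x (t i) * aeval x (f i) = 0 := by
  classical
  choose f hf using fun i => exists_forall_dvd_sub ht fun j => if j = i then (1 : K[X]) else 0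
  refine ⟨f, ?_, fun i hi => ?_⟩
  · have hdvd : ∏ i ∈ s, t i ∣ ∑ i ∈ s, f i - 1 :=
      Finset.prod_dvd_of_coprime ht fun j hj => by
        have : ∑ i ∈ s, f i - 1 = ∑ i ∈ s, (f i - if j = i then 1 else 0) := by
          rw [Finset.sum_sub_distrib, Finset.sum_ite_eq s j, if_pos hj]
        rw [this]
        exact Finset.dvd_sum fun i _ => by simpa [eq_comm] using hf i j hj
    simpa [sub_eq_zero] using aeval_eq_zero_of_dvd_aeval_eq_zero hdvd hx
  · have hdvd : ∏ i ∈ s, t i ∣ t i * f i :=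
      Finset.prod_dvd_of_coprime ht fun j hj => by
        by_cases hji : j = i
        · exact hji ▸ dvd_mul_right _ _
        · simpa [hji] using (hf i j hj).mul_left (t i)
    simpa using aeval_eq_zero_of_dvd_aeval_eq_zero hdvd hx

end Polynomial

section ExpTrunc

variable (𝕂 : Type*) [Field 𝕂]

noncomputable def expTrunc (M : ℕ) : 𝕂[X] :=
  ∑ k ∈ Finset.range M, C (k !⁻¹ : 𝕂) * X ^ k

theorem expTrunc_coeff (M k : ℕ) :
    (expTrunc 𝕂 M).coeff k = if k < M then (k !⁻¹ : 𝕂) else 0 := by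
  simp [expTrunc]

theorem expTrunc_eval_zero {M : ℕ} (hM : 0 < M) :
    (expTrunc 𝕂 M).eval 0 = 1 := by
  simp [← coeff_zero_eq_eval_zero, expTrunc_coeff, hM]

theorem expTrunc_derivative_eval_zero {M : ℕ} (hM : 1 < M) :
    (expTrunc 𝕂 M).derivative.eval 0 = 1 := by
  simp [← coeff_zero_eq_eval_zero, coeff_derivative, expTrunc_coeff, hM]

end ExpTrunc

theorem exp_mul_eq_aeval_expTrunc_mul {𝕂 𝔸 : Type*} [RCLike 𝕂] [NormedRing 𝔸] [NormedAlgebra 𝕂 𝔸]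
    [CompleteSpace 𝔸] {N P : 𝔸} {m M : ℕ} (hN : N ^ m * P = 0) (hmM : m ≤ M) :
    exp N * P = aeval N (expTrunc 𝕂 M) * P := by
  rw [exp_eq_tsum 𝕂, ← (expSeries_summable' N).tsum_mul_right,
    tsum_eq_sum (s := Finset.range M)]
  · simp [expTrunc, Finset.sum_mul, Algebra.smul_def]
  · intro k hk
    obtain ⟨j, rfl⟩ := Nat.exists_eq_add_of_le (hmM.trans (not_lt.1 (Finset.mem_range.not.1 hk)))
    rw [smul_mul_assoc, add_comm, pow_add, mul_assoc, hN, mul_zero, smul_zero]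

noncomputable def expTaylor (c a : ℂ) (M : ℕ) : ℂ[X] :=
  C (Complex.exp (c * a)) * (expTrunc ℂ M).comp (C c * (X - C a))

theorem expTaylor_eval_self (c a : ℂ) {M : ℕ} (hM : 0 < M) :
    (expTaylor c a M).eval a = Complex.exp (c * a) := by
  simp [expTaylor, expTrunc_eval_zero ℂ hM]

theorem expTaylor_derivative_eval_self (c a : ℂ) {M : ℕ} (hM : 1 < M) :
    (expTaylor c a M).derivative.eval a = c * Complex.exp (c * a) := by
  simp [expTaylor, derivative_comp, expTrunc_derivative_eval_zero ℂ hM, mul_comm]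

section BanachAlgebra

variable {𝔸 : Type*} [NormedRing 𝔸] [NormedAlgebra ℂ 𝔸] [CompleteSpace 𝔸]

theorem exp_smul_mul_eq_aeval_expTaylor_mul {E P : 𝔸} (c a : ℂ) {m M : ℕ}
    (hE : (E - algebraMap ℂ 𝔸 a) ^ m * P = 0) (hmM : m ≤ M) :
    exp (c • E) * P = aeval E (expTaylor c a M) * P := by
  let : NormedAlgebra ℚ 𝔸 := NormedAlgebra.restrictScalars ℚ ℂ 𝔸
  have hsplit : c • E = algebraMap ℂ 𝔸 (c * a) + c • (E - algebraMap ℂ 𝔸 a) := by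
    rw [smul_sub, map_mul, ← Algebra.smul_def]
    abel
  have hN : (c • (E - algebraMap ℂ 𝔸 a)) ^ m * P = 0 := by
    rw [_root_.smul_pow, smul_mul_assoc, hE, smul_zero]
  rw [hsplit, exp_add_of_commute (Algebra.commute_algebraMap_left _ _), ← algebraMap_exp_comm,
    mul_assoc, exp_mul_eq_aeval_expTrunc_mul (𝕂 := ℂ) hN hmM, expTaylor]
  simp [aeval_comp, Algebra.smul_def, mul_assoc, ← Complex.exp_eq_exp_ℂ]

theorem exists_aeval_eq_exp_smul {E : 𝔸} {s : Finset ℂ} {m : ℂ → ℕ}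
    (hE : aeval E (∏ a ∈ s, (X - C a) ^ m a) = 0) (c : ℂ) :
    ∃ h : ℂ[X], aeval E h = exp (c • E) ∧
      ∀ a ∈ s, h.eval a = Complex.exp (c * a) ∧ h.derivative.eval a = c * Complex.exp (c * a) := by
  obtain ⟨P, hPsum, hP⟩ :=
    exists_sum_aeval_eq_one (pairwise_isCoprime_X_sub_C_pow (Set.injOn_id _) m) hE
  -- Two orders beyond `m a` make `h` agree with `exp (c * ·)` to first order also at simple roots.
  obtain ⟨h, hh⟩ :=
    exists_forall_dvd_sub (pairwise_isCoprime_X_sub_C_pow (Set.injOn_id _) (m · + 2))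
      fun a => expTaylor c a (m a + 2)
  refine ⟨h, ?_, fun a ha => ?_⟩
  · calc aeval E h = ∑ a ∈ s, aeval E h * aeval E (P a) := by
          rw [← Finset.mul_sum, hPsum, mul_one]
      _ = ∑ a ∈ s, exp (c • E) * aeval E (P a) := Finset.sum_congr rfl fun a ha => by
        rw [exp_smul_mul_eq_aeval_expTaylor_mul c a (by simpa using hP a ha)
          (Nat.le_add_right _ 2)]
        exact aeval_mul_eq_of_dvd_sub
          ((pow_dvd_pow _ (Nat.le_add_right _ 2)).trans (hh a ha)) (hP a ha)
      _ = exp (c • E) := by rw [← Finset.mul_sum, hPsum, mul_one]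
  · obtain ⟨hev, hder⟩ := eval_eq_and_derivative_eval_eq_of_sq_dvd_sub
      ((pow_dvd_pow _ (Nat.le_add_left _ _)).trans (hh a ha))
    exact ⟨hev.trans (expTaylor_eval_self c a (by omega)),
      hder.trans (expTaylor_derivative_eval_self c a (by omega))⟩

theorem exists_aeval_exp_smul_eq_self {E : 𝔸} {s : Finset ℂ} {m : ℂ → ℕ}
    (hE : aeval E (∏ a ∈ s, (X - C a) ^ m a) = 0) {c : ℂ} (hc : c ≠ 0)
    (hinj : Set.InjOn (fun z => Complex.exp (c * z)) s) :
    ∃ q : ℂ[X], aeval (exp (c • E)) q = E := by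
  obtain ⟨h, hhE, hh⟩ := exists_aeval_eq_exp_smul hE c
  obtain ⟨q, hq⟩ := exists_comp_sub_X_dvd_of_injOn (h := h) (s := s)
    (fun a ha b hb hab => hinj ha hb (by simpa [(hh a ha).1, (hh b hb).1] using hab))
    (fun a ha => by rw [(hh a ha).2]; exact mul_ne_zero hc (Complex.exp_ne_zero _)) m
  have hdvd : ∏ a ∈ s, (X - C a) ^ m a ∣ q.comp h - X :=
    Finset.prod_dvd_of_coprime (pairwise_isCoprime_X_sub_C_pow (Set.injOn_id _) m) hq
  refine ⟨q, ?_⟩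
  simpa [← hhE, aeval_comp, sub_eq_zero] using aeval_eq_zero_of_dvd_aeval_eq_zero hdvd hE

end BanachAlgebra

/-- If `E` is non-resonant (no two eigenvalues differ by a
nonzero integer), then `E` is a polynomial in `exp(2πi·E)`; in particular every
matrix commuting with `exp(2πi·E)` commutes with `E`. -/
theorem stmt11 (n : ℕ) (E : Matrix (Fin n) (Fin n) ℂ)
    (hnr : ∀ x y : ℂ, E.charpoly.IsRoot x → E.charpoly.IsRoot y →
      ∀ z : ℤ, x - y = (z : ℂ) → x = y) :
    (∃ q : Polynomial ℂ,
      Polynomial.aeval (NormedSpace.exp (((2 * Real.pi : ℝ) * Complex.I) • E)) q = E) ∧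
    ∀ B : Matrix (Fin n) (Fin n) ℂ,
      Commute B (NormedSpace.exp (((2 * Real.pi : ℝ) * Complex.I) • E)) →
        Commute B E := by
  let : NormedRing (Matrix (Fin n) (Fin n) ℂ) := Matrix.linftyOpNormedRing
  let : NormedAlgebra ℂ (Matrix (Fin n) (Fin n) ℂ) := Matrix.linftyOpNormedAlgebra
  set c : ℂ := ((2 * Real.pi : ℝ) : ℂ) * Complex.I
  have hc : c ≠ 0 := mul_ne_zero (by exact_mod_cast Real.two_pi_pos.ne') Complex.I_ne_zero
  have hE : aeval E (∏ a ∈ E.charpoly.roots.toFinset,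
      (X - C a) ^ E.charpoly.rootMultiplicity a) = 0 := by
    rw [← prod_multiset_root_eq_finset_root,
      ← (IsAlgClosed.splits _).eq_prod_roots_of_monic E.charpoly_monic, Matrix.aeval_self_charpoly]
  have hinj : Set.InjOn (fun z => Complex.exp (c * z)) E.charpoly.roots.toFinset := by
    intro x hx y hy hxy
    obtain ⟨k, hk⟩ := Complex.exp_eq_exp_iff_exists_int.1 hxy
    simp only [Finset.mem_coe, Multiset.mem_toFinset, mem_roots E.charpoly_monic.ne_zero] at hx hy
    refine hnr x y hx hy k (mul_left_cancel₀ hc ?_)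
    linear_combination (norm := (push_cast [c]; ring)) hk
  obtain ⟨q, hq⟩ := exists_aeval_exp_smul_eq_self hE hc hinj
  exact ⟨⟨q, hq⟩, fun B hB => hq ▸
    Algebra.commute_of_mem_adjoin_singleton_of_commute (aeval_mem_adjoin_singleton ℂ _) hB⟩
end

section
/- Let n = l_1 + l_2 + ⋯ + l_K with positive integers l_1,…,l_K, and let κ̄_1 > κ̄_2 > ⋯ > κ̄_K be integers. Partition n×n complex matrices into blocks of sizes l_i × l_j accordingly. Let V : ℂ → M_n(ℂ) be entire (every entry is an entire function) with V(z) invertible for every z ∈ ℂ, and suppose there are constants C > 0 and R > 0 such that for all |z| ≥ R and all block indices i, j: ‖V_{ij}(z)‖ ≤ C·|z|^{κ̄_i − κ̄_j}. Then: (1) V_{ij}(z) = 0 identically whenever i > j; (2) for i ≤ j, every entry of V_{ij} is a polynomial in z of degree at most κ̄_i − κ̄_j; and (3) the diagonal blocks V_{ii} are constant invertible l_i × l_i matrices. -/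
/-!
Each entry `f` of the `(i, j)` block is entire with `f z = O(z ^ (κ i - κ j))` at infinity.
An entire function that is `O(z ^ k)` with `k < 0` tends to `0` at infinity, so it vanishes by
Liouville's theorem; for `k ≥ 0`, the difference quotient `(f z - f 0) / z` is `O(z ^ (k - 1))`,
and induction on `k` makes `f` a polynomial of degree at most `k`. Hence `V 0` is block upper
triangular with constant diagonal blocks, its determinant is the product of theirs, and the
invertibility of `V 0` passes to each of them.
-/

open Asymptotics Bornology Filter Polynomial

namespace Matrix

variable {ι R : Type*} {β : ι → Type*} [Fintype ι] [DecidableEq ι] [∀ i, Fintype (β i)]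
  [∀ i, DecidableEq (β i)] [CommRing R]

theorem det_toSquareBlock_sigma_fst (M : Matrix (Σ i, β i) (Σ i, β i) R) (i : ι) :
    (M.toSquareBlock Sigma.fst i).det = (of fun s t : β i => M ⟨i, s⟩ ⟨i, t⟩).det := by
  have : M.toSquareBlock Sigma.fst i = (of fun s t : β i => M ⟨i, s⟩ ⟨i, t⟩).submatrix
      (Equiv.sigmaSubtype i) (Equiv.sigmaSubtype i) := by
    ext ⟨⟨_, s⟩, rfl⟩ ⟨⟨_, t⟩, ht⟩
    cases ht
    rfl
  rw [this, det_submatrix_equiv_self]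

theorem BlockTriangular.isUnit_diagonal_block_sigma [LinearOrder ι]
    {M : Matrix (Σ i, β i) (Σ i, β i) R} (hM : BlockTriangular M Sigma.fst) (hu : IsUnit M)
    (i : ι) : IsUnit (of fun s t : β i => M ⟨i, s⟩ ⟨i, t⟩) := by
  rw [isUnit_iff_isUnit_det] at hu ⊢
  rw [hM.det_fintype, IsUnit.prod_univ_iff] at hu
  exact det_toSquareBlock_sigma_fst M i ▸ hu i

end Matrix

section

variable {f : ℂ → ℂ} {k : ℤ}

theorem isBigO_cobounded_zpow_of_norm_le {C R : ℝ} (h : ∀ z, R ≤ ‖z‖ → ‖f z‖ ≤ C * ‖z‖ ^ k) :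
    f =O[cobounded ℂ] (· ^ k) :=
  IsBigO.of_bound C <| (eventually_cobounded_le_norm R).mono fun z hz => by
    simpa only [norm_zpow] using h z hz

theorem Asymptotics.IsBigO.dslope_zero (h : f =O[cobounded ℂ] (· ^ k)) (hk : 0 ≤ k) :
    dslope f 0 =O[cobounded ℂ] (· ^ (k - 1)) := by
  have hconst : (fun _ => f 0) =O[cobounded ℂ] (· ^ k) :=
    IsBigO.of_bound ‖f 0‖ <| (eventually_cobounded_le_norm 1).mono fun z hz => by
      rw [norm_zpow]
      exact le_mul_of_one_le_right (norm_nonneg _) (one_le_zpow₀ hz hk)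
  refine ((h.sub hconst).mul (isBigO_refl (·⁻¹) _)).congr' ?_ ?_
  · filter_upwards [eventually_ne_cobounded 0] with z hz
    rw [dslope_of_ne _ hz, slope_def_field, sub_zero, div_eq_mul_inv]
  · filter_upwards [eventually_ne_cobounded 0] with z hz
    rw [zpow_sub_one₀ hz]

theorem eq_eval_C_add_X_mul_of_dslope_eq_eval {Q : ℂ[X]} (hQ : ∀ z, dslope f 0 z = Q.eval z)
    (z : ℂ) : f z = (C (f 0) + X * Q).eval z := by
  have := sub_smul_dslope f 0 z
  rw [hQ, sub_zero, smul_eq_mul] at this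
  simp only [eval_add, eval_C, eval_mul, eval_X]
  linear_combination -this

namespace Differentiable

theorem dslope (hf : Differentiable ℂ f) (a : ℂ) : Differentiable ℂ (dslope f a) :=
  differentiableOn_univ.1 <| (Complex.differentiableOn_dslope univ_mem).2 hf.differentiableOn

theorem eq_zero_of_isBigO_zpow_of_neg (hf : Differentiable ℂ f) (hk : k < 0)
    (h : f =O[cobounded ℂ] (· ^ k)) : f = 0 := by
  have hpow : Tendsto (· ^ k) (cobounded ℂ) (nhds (0 : ℂ)) := by
    rw [tendsto_zero_iff_norm_tendsto_zero]
    simpa only [Function.comp_def, norm_zpow] using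
      (tendsto_zpow_atTop_zero hk).comp tendsto_norm_cobounded_atTop
  exact hf.eq_const_of_tendsto_cocompact <|
    Metric.cobounded_eq_cocompact (α := ℂ) ▸ h.trans_tendsto hpow

theorem exists_polynomial_of_isBigO_zpow (hf : Differentiable ℂ f) (hk : 0 ≤ k)
    (h : f =O[cobounded ℂ] (· ^ k)) :
    ∃ P : ℂ[X], (P.natDegree : ℤ) ≤ k ∧ ∀ z, f z = P.eval z := by
  lift k to ℕ using hk
  induction k generalizing f with
  | zero =>
    have hg := (hf.dslope 0).eq_zero_of_isBigO_zpow_of_neg (by norm_num) (h.dslope_zero le_rfl)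
    refine ⟨C (f 0) + X * 0, by simp, eq_eval_C_add_X_mul_of_dslope_eq_eval fun z => ?_⟩
    simp [hg]
  | succ d ih =>
    obtain ⟨Q, hQ, hgQ⟩ := ih (hf.dslope 0) (by simpa using h.dslope_zero (by positivity))
    refine ⟨C (f 0) + X * Q, ?_, eq_eval_C_add_X_mul_of_dslope_eq_eval hgQ⟩
    grw [natDegree_C_add, natDegree_mul_le, natDegree_X_le]
    push_cast
    omega

end Differentiable

end

theorem stmt13_general (K : ℕ) (l : Fin K → ℕ)
    (κ : Fin K → ℤ) (hκ : ∀ i j : Fin K, i < j → κ j < κ i)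
    (V : ℂ → Matrix ((i : Fin K) × Fin (l i)) ((i : Fin K) × Fin (l i)) ℂ)
    (hVa : ∀ r s, Differentiable ℂ (fun z => V z r s))
    (hVu : ∀ z, IsUnit (V z))
    (C R : ℝ)
    (hbound : ∀ z : ℂ, R ≤ ‖z‖ →
      ∀ (i j : Fin K) (s : Fin (l i)) (t : Fin (l j)),
        ‖V z ⟨i, s⟩ ⟨j, t⟩‖ ≤ C * ‖z‖ ^ (κ i - κ j)) :
    (∀ (i j : Fin K), j < i →
      ∀ (s : Fin (l i)) (t : Fin (l j)) (z : ℂ), V z ⟨i, s⟩ ⟨j, t⟩ = 0) ∧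
    (∀ (i j : Fin K), i ≤ j → ∀ (s : Fin (l i)) (t : Fin (l j)),
      ∃ P : Polynomial ℂ, (P.natDegree : ℤ) ≤ κ i - κ j ∧
        ∀ z : ℂ, V z ⟨i, s⟩ ⟨j, t⟩ = P.eval z) ∧
    (∀ i : Fin K, ∃ B : Matrix (Fin (l i)) (Fin (l i)) ℂ, IsUnit B ∧
      ∀ (z : ℂ) (s t : Fin (l i)), V z ⟨i, s⟩ ⟨i, t⟩ = B s t) := by
  have hO (i j : Fin K) (s : Fin (l i)) (t : Fin (l j)) :
      (fun z => V z ⟨i, s⟩ ⟨j, t⟩) =O[cobounded ℂ] (· ^ (κ i - κ j)) :=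
    isBigO_cobounded_zpow_of_norm_le fun z hz => hbound z hz i j s t
  have lower (i j : Fin K) (hji : j < i) s t z : V z ⟨i, s⟩ ⟨j, t⟩ = 0 :=
    congrFun ((hVa _ _).eq_zero_of_isBigO_zpow_of_neg (by linarith [hκ j i hji]) (hO i j s t)) z
  have poly (i j : Fin K) (hij : i ≤ j) s t :
      ∃ P : ℂ[X], (P.natDegree : ℤ) ≤ κ i - κ j ∧ ∀ z, V z ⟨i, s⟩ ⟨j, t⟩ = P.eval z := by
    refine (hVa _ _).exists_polynomial_of_isBigO_zpow ?_ (hO i j s t)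
    rcases hij.lt_or_eq with hij | rfl
    · linarith [hκ i j hij]
    · simp
  refine ⟨lower, poly, fun i => ⟨Matrix.of fun s t => V 0 ⟨i, s⟩ ⟨i, t⟩, ?_, fun z s t => ?_⟩⟩
  · exact Matrix.BlockTriangular.isUnit_diagonal_block_sigma
      (fun a b hba => lower a.1 b.1 hba a.2 b.2 0) (hVu 0) i
  · obtain ⟨P, hP, hVP⟩ := poly i i le_rfl s t
    rw [sub_self, Nat.cast_nonpos] at hP
    rw [hVP, Matrix.of_apply, hVP 0, eq_C_of_natDegree_eq_zero hP, eval_C, eval_C]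

/-- (Liouville-type argument from Theorem 3.5 of the paper.)
An entire, everywhere invertible block matrix function `V(z)` whose `(i,j)`
block grows at most like `|z|^{κ̄_i − κ̄_j}` (with `κ̄_1 > ⋯ > κ̄_K`) is block
upper triangular with polynomial blocks of degree at most `κ̄_i − κ̄_j` and
constant invertible diagonal blocks.  Rows and columns are indexed by the
sigma type `Σ i, Fin (l i)` encoding the partition `n = l_1 + ⋯ + l_K`. -/
theorem stmt13 (K : ℕ) (hK : 1 ≤ K) (l : Fin K → ℕ) (hl : ∀ i, 0 < l i)
    (κ : Fin K → ℤ) (hκ : ∀ i j : Fin K, i < j → κ j < κ i)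
    (V : ℂ → Matrix ((i : Fin K) × Fin (l i)) ((i : Fin K) × Fin (l i)) ℂ)
    (hVa : ∀ r s, Differentiable ℂ (fun z => V z r s))
    (hVu : ∀ z, IsUnit (V z))
    (C R : ℝ) (hC : 0 < C) (hR : 0 < R)
    (hbound : ∀ z : ℂ, R ≤ ‖z‖ →
      ∀ (i j : Fin K) (s : Fin (l i)) (t : Fin (l j)),
        ‖V z ⟨i, s⟩ ⟨j, t⟩‖ ≤ C * ‖z‖ ^ (κ i - κ j)) :
    (∀ (i j : Fin K), j < i →
      ∀ (s : Fin (l i)) (t : Fin (l j)) (z : ℂ), V z ⟨i, s⟩ ⟨j, t⟩ = 0) ∧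
    (∀ (i j : Fin K), i ≤ j → ∀ (s : Fin (l i)) (t : Fin (l j)),
      ∃ P : Polynomial ℂ, (P.natDegree : ℤ) ≤ κ i - κ j ∧
        ∀ z : ℂ, V z ⟨i, s⟩ ⟨j, t⟩ = P.eval z) ∧
    (∀ i : Fin K, ∃ B : Matrix (Fin (l i)) (Fin (l i)) ℂ, IsUnit B ∧
      ∀ (z : ℂ) (s t : Fin (l i)), V z ⟨i, s⟩ ⟨i, t⟩ = B s t) :=
  stmt13_general K l κ hκ V hVa hVu C R hbound
end

section
/- Let M_1, M_2, M_3 be 2×2 complex matrices and μ_1, μ_2, μ_3 ∈ ℂ. Form the 2×6 complex matrix B = (M_1 − μ_1 I | M_2 − μ_2 I | M_3 − μ_3 I) obtained by horizontal concatenation. Then rank(B) ≤ 1 if and only if there exists a one-dimensional subspace L of ℂ^2 such that M_k L ⊆ L for k = 1,2,3 and the induced action of M_k on the quotient ℂ^2/L is multiplication by μ_k for each k (equivalently, there exists an invertible 2×2 matrix S such that S^{-1} M_k S is upper triangular with (2,2)-entry equal to μ_k for each k = 1,2,3). -/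
/-!
The column space of `B` is the sum of the column spaces of the blocks `M k - μ k • 1`, so
`rank B ≤ 1` says exactly that some line `L` contains all of them, i.e. that every
`M k - μ k • 1` maps `ℂ²` into `L`. That already makes `L` invariant under `M k`, with `M k`
acting as `μ k` on `ℂ² ⧸ L`.
-/

theorem Matrix.range_mulVecLin_of_blocks {R m n ι : Type*} [CommSemiring R] [Fintype n]
    [Fintype ι] (B : Matrix m (ι × n) R) (N : ι → Matrix m n R)
    (hB : ∀ i k j, B i (k, j) = N k i j) :
    LinearMap.range B.mulVecLin = ⨆ k, LinearMap.range (N k).mulVecLin := by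
  have hcols : Set.range B.col = ⋃ k, Set.range (N k).col := by
    ext v
    simp only [Set.mem_range, Set.mem_iUnion, Prod.exists]
    refine exists_congr fun k => exists_congr fun j => ?_
    rw [show B.col (k, j) = (N k).col j from funext fun i => hB i k j]
  simp only [Matrix.range_mulVecLin, hcols, Submodule.span_iUnion]

theorem Matrix.range_sub_smul_one_mulVecLin_le_iff {R n : Type*} [CommRing R] [Fintype n]
    [DecidableEq n] (M : Matrix n n R) (μ : R) (L : Submodule R (n → R)) :
    LinearMap.range (M - μ • 1).mulVecLin ≤ L ↔ ∀ v, M.mulVec v - μ • v ∈ L := by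
  simp [LinearMap.range_le_iff_comap, Submodule.eq_top_iff']

theorem Submodule.apply_mem_of_forall_sub_smul_mem {R V : Type*} [Ring R] [AddCommGroup V]
    [Module R V] {L : Submodule R V} {f : V → V} {μ : R} (h : ∀ v, f v - μ • v ∈ L) :
    ∀ v ∈ L, f v ∈ L := fun v hv => by
  simpa using L.add_mem (h v) (L.smul_mem μ hv)

theorem Submodule.exists_finrank_eq_one_le_iff {K V : Type*} [DivisionRing K] [AddCommGroup V]
    [Module K V] [FiniteDimensional K V] [Nontrivial V] (p : Submodule K V) :
    (∃ L : Submodule K V, Module.finrank K L = 1 ∧ p ≤ L) ↔ Module.finrank K p ≤ 1 := by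
  refine ⟨fun ⟨L, hL, hpL⟩ => hL ▸ Submodule.finrank_mono hpL, fun hp => ?_⟩
  rcases Nat.le_one_iff_eq_zero_or_eq_one.mp hp with hp | hp
  · obtain ⟨v, hv⟩ := exists_ne (0 : V)
    exact ⟨K ∙ v, finrank_span_singleton hv, by simp [Submodule.finrank_eq_zero.mp hp]⟩
  · exact ⟨p, hp, le_rfl⟩

/-- The `2×6` matrix `(M₁−μ₁I | M₂−μ₂I | M₃−μ₃I)` has rank at
most one iff there is a one-dimensional subspace `L ⊆ ℂ²` invariant under each
`M_k` on whose quotient each `M_k` acts as multiplication by `μ_k`. -/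
theorem stmt14 (M : Fin 3 → Matrix (Fin 2) (Fin 2) ℂ) (μ : Fin 3 → ℂ)
    (B : Matrix (Fin 2) (Fin 3 × Fin 2) ℂ)
    (hB : ∀ (i : Fin 2) (k : Fin 3) (j : Fin 2), B i (k, j) = (M k - μ k • 1) i j) :
    B.rank ≤ 1 ↔
      ∃ L : Submodule ℂ (Fin 2 → ℂ), Module.finrank ℂ L = 1 ∧
        ∀ k, (∀ v ∈ L, (M k).mulVec v ∈ L) ∧
          ∀ v : Fin 2 → ℂ, (M k).mulVec v - μ k • v ∈ L := by
  rw [Matrix.rank, ← Submodule.exists_finrank_eq_one_le_iff,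
    Matrix.range_mulVecLin_of_blocks B _ hB]
  refine exists_congr fun L => and_congr_right fun _ => ?_
  simp only [iSup_le_iff, Matrix.range_sub_smul_one_mulVecLin_le_iff]
  exact forall_congr' fun k =>
    (and_iff_right_of_imp Submodule.apply_mem_of_forall_sub_smul_mem).symm
end

section
/- Let n ≥ 1 and r_1,…,r_n ∈ ℂ. Define the n×n complex matrix Ê = C + D, where C has first-row entries C_{1j} = −r_j for j = 1,…,n, subdiagonal entries C_{i+1,i} = 1 for i = 1,…,n−1, and all other entries 0, and D = diag(n−1, n−2, …, 1, 0). Then the characteristic polynomial of Ê satisfies det(ρ·I − Ê) = Π_{j=0}^{n−1} (ρ − j) + Σ_{k=1}^{n} r_k · Π_{j=0}^{n−1−k} (ρ − j), where an empty product equals 1. In particular, the eigenvalues of Ê are exactly the roots of the indicial polynomial ρ(ρ−1)⋯(ρ−n+1) + Σ_{k=1}^{n} r_k · ρ(ρ−1)⋯(ρ−n+1+k). -/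
open Finset Polynomial Matrix

private lemma aux_det {R : Type*} [CommRing R] (D : ℕ → R) :
    ∀ (n : ℕ) (a : Fin (n+1) → R),
    (Matrix.of fun i j : Fin (n+1) =>
        if (i : ℕ) = 0 then a j
        else (if (i : ℕ) = (j : ℕ) + 1 then (-1 : R) else 0) +
          (if i = j then D (i : ℕ) else 0)).det
      = ∑ j : Fin (n+1), a j * ∏ i ∈ Finset.range (n+1), (if (j : ℕ) < i then D i else 1) := by
  intro n
  induction n with
  | zero =>
      intro a
      simp [Matrix.det_fin_one]
  | succ n ih =>
      intro a
      set f : Fin (n+2) → Fin (n+2) → R := fun i j =>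
        if (i : ℕ) = 0 then a j
        else (if (i : ℕ) = (j : ℕ) + 1 then (-1 : R) else 0) +
          (if i = j then D (i : ℕ) else 0) with hf
      rw [Matrix.det_succ_column _ (Fin.last (n+1))]
      rw [Fin.sum_univ_castSucc, Fin.sum_univ_succ]
      have hmid : (∑ i : Fin n,
          (-1) ^ ((((i.succ).castSucc : Fin (n+2)) : ℕ) + ((Fin.last (n+1) : Fin (n+2)) : ℕ)) *
            (Matrix.of f) (i.succ).castSucc (Fin.last (n+1)) *
            ((Matrix.of f).submatrix ((i.succ).castSucc).succAbove
              (Fin.last (n+1)).succAbove).det) = 0 := by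
        refine Finset.sum_eq_zero fun i _ => ?_
        have hi := i.isLt
        have h1 : (Matrix.of f) (i.succ).castSucc (Fin.last (n+1)) = 0 := by
          simp only [Matrix.of_apply, hf, Fin.ext_iff, Fin.coe_castSucc, Fin.val_succ,
            Fin.val_last]
          split_ifs <;> first | ring1 | (exfalso; omega) | exact (‹False›).elim
        rw [h1]
        ring
      rw [hmid]
      have hminor0 : ((Matrix.of f).submatrix
          (((0 : Fin (n+1)).castSucc).succAbove) ((Fin.last (n+1)).succAbove)).det
          = (-1 : R) ^ (n+1) := by
        rw [Fin.castSucc_zero, Fin.succAbove_zero, Fin.succAbove_last]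
        rw [Matrix.det_of_upperTriangular]
        · have hd : ∀ i : Fin (n+1),
              ((Matrix.of f).submatrix Fin.succ Fin.castSucc) i i = -1 := by
            intro i
            simp only [Matrix.submatrix_apply, Matrix.of_apply, hf, Fin.ext_iff,
              Fin.val_succ, Fin.coe_castSucc]
            split_ifs <;> first | ring1 | (exfalso; omega) | exact (‹False›).elim
          calc (∏ i : Fin (n+1), ((Matrix.of f).submatrix Fin.succ Fin.castSucc) i i)
              = ∏ _i : Fin (n+1), (-1 : R) := Finset.prod_congr rfl fun i _ => hd i
            _ = (-1 : R) ^ (n+1) := by simp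
        · intro i j hji
          have hji' : (j : ℕ) < (i : ℕ) := hji
          simp only [Matrix.submatrix_apply, Matrix.of_apply, hf, Fin.ext_iff,
            Fin.val_succ, Fin.coe_castSucc]
          split_ifs <;> first | ring1 | (exfalso; omega) | exact (‹False›).elim
      have hminor1 : ((Matrix.of f).submatrix
          ((Fin.last (n+1)).succAbove) ((Fin.last (n+1)).succAbove)).det
          = ∑ j : Fin (n+1), a j.castSucc *
              ∏ i ∈ Finset.range (n+1), (if (j : ℕ) < i then D i else 1) := by
        rw [Fin.succAbove_last]
        have heq : (Matrix.of f).submatrix (Fin.castSucc : Fin (n+1) → Fin (n+2)) Fin.castSucc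
            = Matrix.of fun i j : Fin (n+1) =>
              if (i : ℕ) = 0 then (a ∘ Fin.castSucc) j
              else (if (i : ℕ) = (j : ℕ) + 1 then (-1 : R) else 0) +
                (if i = j then D (i : ℕ) else 0) := by
          ext i j
          simp only [Matrix.submatrix_apply, Matrix.of_apply, hf, Fin.coe_castSucc,
            Function.comp_apply, Fin.castSucc_inj]
        rw [heq, ih]
        rfl
      rw [hminor0, hminor1]
      have h00 : (Matrix.of f) ((0 : Fin (n+1)).castSucc) (Fin.last (n+1)) = a (Fin.last (n+1)) := by
        simp [hf]
      have hlastlast : (Matrix.of f) (Fin.last (n+1)) (Fin.last (n+1)) = D (n+1) := by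
        simp only [Matrix.of_apply, hf, Fin.ext_iff, Fin.val_last]
        split_ifs <;> first | ring1 | (exfalso; omega) | exact (‹False›).elim
      rw [h00, hlastlast]
      -- now the RHS
      rw [Fin.sum_univ_castSucc (f := fun j : Fin (n+2) =>
        a j * ∏ i ∈ Finset.range (n+2), (if (j : ℕ) < i then D i else 1))]
      have hPlast : (∏ i ∈ Finset.range (n+2),
          (if ((Fin.last (n+1) : Fin (n+2)) : ℕ) < i then D i else 1)) = 1 := by
        refine Finset.prod_eq_one fun i hi => ?_
        rw [Finset.mem_range] at hi
        simp only [Fin.val_last]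
        rw [if_neg (by omega)]
      have hPcast : ∀ j : Fin (n+1),
          (∏ i ∈ Finset.range (n+2), (if ((j.castSucc : Fin (n+2)) : ℕ) < i then D i else 1))
          = (∏ i ∈ Finset.range (n+1), (if (j : ℕ) < i then D i else 1)) * D (n+1) := by
        intro j
        have hj := j.isLt
        rw [Finset.prod_range_succ]
        rw [if_pos (by simp only [Fin.coe_castSucc]; omega)]
        simp only [Fin.coe_castSucc]
      simp only [hPcast, hPlast]
      have hS : ∑ j : Fin (n+1), a j.castSucc *
            ((∏ i ∈ Finset.range (n+1), (if (j : ℕ) < i then D i else 1)) * D (n+1))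
          = D (n+1) * ∑ j : Fin (n+1), a j.castSucc *
              ∏ i ∈ Finset.range (n+1), (if (j : ℕ) < i then D i else 1) := by
        rw [Finset.mul_sum]
        exact Finset.sum_congr rfl fun j _ => by ring
      rw [hS]
      simp only [Fin.castSucc_zero, Fin.val_zero, Fin.val_last, zero_add, add_zero, mul_one,
        pow_add]
      set t := (-1 : R) ^ (n+1) with ht
      have h3 : t * t = 1 := by
        rw [ht, ← pow_add]
        exact Even.neg_one_pow ⟨n+1, rfl⟩
      set S := ∑ j : Fin (n+1), a j.castSucc *
        ∏ i ∈ Finset.range (n+1), (if (j : ℕ) < i then D i else 1) with hSdef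
      linear_combination (a (Fin.last (n+1)) + D (n+1) * S) * h3

private lemma aux_prod {M : Type*} [CommMonoid M] (f : ℕ → M) (m jv : ℕ) (hj : jv ≤ m) :
    (∏ i ∈ Finset.range (m+1), (if jv < i then f (m - i) else 1))
    = ∏ i ∈ Finset.range (m - jv), f i := by
  rw [← Finset.prod_filter]
  have hfil : (Finset.range (m+1)).filter (fun i => jv < i) = Finset.Ico (jv+1) (m+1) := by
    ext x
    simp only [Finset.mem_filter, Finset.mem_range, Finset.mem_Ico]
    omega
  rw [hfil, Finset.prod_Ico_eq_prod_range]
  have h1 : m + 1 - (jv + 1) = m - jv := by omega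
  rw [h1, ← Finset.prod_range_reflect (fun i => f i) (m - jv)]
  refine Finset.prod_congr rfl fun i hi => ?_
  rw [Finset.mem_range] at hi
  congr 1
  omega

/-- The characteristic polynomial of the companion-type
matrix `Ê = C + D` (first row `−r_1,…,−r_n`, ones on the first subdiagonal,
plus `D = diag(n−1,…,1,0)`) equals the indicial polynomial
`Π_{j=0}^{n−1}(ρ−j) + Σ_{k=1}^{n} r_k Π_{j=0}^{n−1−k}(ρ−j)`.  Here `r : Fin n → ℂ`
enumerates `r_1,…,r_n`. -/
theorem stmt16 (n : ℕ) (hn : 1 ≤ n) (r : Fin n → ℂ)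
    (E : Matrix (Fin n) (Fin n) ℂ)
    (hE : ∀ i j : Fin n, E i j =
      (if (i : ℕ) = 0 then -r j else 0) +
      (if (i : ℕ) = (j : ℕ) + 1 then 1 else 0) +
      (if i = j then ((n - 1 - (i : ℕ) : ℕ) : ℂ) else 0)) :
    E.charpoly =
      (∏ j ∈ Finset.range n, (Polynomial.X - Polynomial.C (j : ℂ))) +
      ∑ k : Fin n, Polynomial.C (r k) *
        ∏ j ∈ Finset.range (n - 1 - (k : ℕ)), (Polynomial.X - Polynomial.C (j : ℂ)) := by
  obtain ⟨m, rfl⟩ : ∃ m, n = m + 1 := ⟨n - 1, by omega⟩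
  set Dfun : ℕ → Polynomial ℂ := fun i => X - C ((m + 1 - 1 - i : ℕ) : ℂ) with hD
  set A : Fin (m+1) → Polynomial ℂ := fun j =>
    C (r j) + (if (j : ℕ) = 0 then X - C ((m : ℕ) : ℂ) else 0) with hA
  have hC : charmatrix E = Matrix.of (fun i j : Fin (m+1) =>
      if (i : ℕ) = 0 then A j
      else (if (i : ℕ) = (j : ℕ) + 1 then (-1 : Polynomial ℂ) else 0) +
        (if i = j then Dfun (i : ℕ) else 0)) := by
    ext i j
    rw [Matrix.charmatrix_apply, hE]
    simp only [Matrix.of_apply, Matrix.diagonal_apply, map_add, map_neg, _root_.map_one,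
      map_natCast, apply_ite Polynomial.C, map_zero, hD, hA, Fin.ext_iff]
    split_ifs <;> first | ring1 | (exfalso; omega) | (simp_all; try ring1)
  have hcp : E.charpoly = (charmatrix E).det := rfl
  rw [hcp, hC, aux_det Dfun m A]
  have hP : ∀ j : Fin (m + 1),
      (∏ i ∈ Finset.range (m+1), (if (j : ℕ) < i then Dfun i else 1))
      = ∏ i ∈ Finset.range (m - (j : ℕ)), (X - C (i : ℂ)) := by
    intro j
    have h1 : ∀ i, (if (j : ℕ) < i then Dfun i else 1)
        = (if (j : ℕ) < i then (X : Polynomial ℂ) - C (((m - i : ℕ)) : ℂ) else 1) := by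
      intro i
      by_cases h : (j : ℕ) < i <;> simp [h, hD]
    rw [Finset.prod_congr rfl (fun i _ => h1 i)]
    exact aux_prod (fun t => (X : Polynomial ℂ) - C ((t : ℕ) : ℂ)) m (j : ℕ)
      (by have := j.isLt; omega)
  simp only [hP, hA]
  rw [Finset.sum_congr rfl (fun j _ => add_mul (C (r j))
    (if (j : ℕ) = 0 then X - C ((m : ℕ) : ℂ) else 0) _), Finset.sum_add_distrib]
  rw [add_comm (∏ j ∈ Finset.range (m+1), (X - C (j : ℂ)))]
  congr 1
  rw [Finset.sum_eq_single (0 : Fin (m+1))]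
  · simp only [Fin.val_zero, Nat.sub_zero, if_true]
    rw [Finset.prod_range_succ]
    ring
  · intro j _ hj
    rw [if_neg, zero_mul]
    exact fun h => hj (Fin.ext (by rw [h, Fin.val_zero]))
  · simp
end

section
/- Let n ≥ 1, let U ⊆ ℂ be a nonempty open connected set, let A : U → M_n(ℂ) be analytic on U, and let Y : U → M_n(ℂ) satisfy: Y has complex derivative A(z)·Y(z) at every z ∈ U. If det Y(z_0) ≠ 0 for some z_0 ∈ U, then det Y(z) ≠ 0 for every z ∈ U. -/
open Matrix Filter Topology

/-- Jacobi's formula: the derivative of `det ∘ Y` is `trace (adjugate (Y z) * Y')`. -/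
lemma jacobi_det {n : ℕ} (Y : ℂ → Matrix (Fin n) (Fin n) ℂ) (Y' : Matrix (Fin n) (Fin n) ℂ)
    (z : ℂ) (h : ∀ i j, HasDerivAt (fun w => Y w i j) (Y' i j) z) :
    HasDerivAt (fun w => (Y w).det) ((Matrix.adjugate (Y z) * Y').trace) z := by
  classical
  have hterm : ∀ σ : Equiv.Perm (Fin n),
      HasDerivAt (fun w => ((Equiv.Perm.sign σ : ℤ) : ℂ) * ∏ i, Y w (σ i) i)
        (((Equiv.Perm.sign σ : ℤ) : ℂ) *
          ∑ i, (∏ j ∈ Finset.univ.erase i, Y z (σ j) j) • Y' (σ i) i) z :=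
    fun σ => (HasDerivAt.fun_finsetProd fun i _ => h (σ i) i).const_mul _
  have hsum := HasDerivAt.fun_sum (fun σ (_ : σ ∈ (Finset.univ : Finset (Equiv.Perm (Fin n)))) => hterm σ)
  have hfun : (fun w => ∑ σ ∈ (Finset.univ : Finset (Equiv.Perm (Fin n))),
      ((Equiv.Perm.sign σ : ℤ) : ℂ) * ∏ i, Y w (σ i) i) = fun w => (Y w).det := by
    funext w
    rw [Matrix.det_apply']
  rw [hfun] at hsum
  refine hsum.congr_deriv (Eq.symm ?_)
  -- now prove trace equality
  have hprod : ∀ (σ : Equiv.Perm (Fin n)) (i : Fin n) (c : Fin n → ℂ),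
      (∏ j, ((Y z).updateCol i c) (σ j) j) = c (σ i) * ∏ j ∈ Finset.univ.erase i, Y z (σ j) j := by
    intro σ i c
    rw [← Finset.mul_prod_erase Finset.univ (fun j => ((Y z).updateCol i c) (σ j) j)
      (Finset.mem_univ i)]
    congr 1
    · simp [Matrix.updateCol_apply]
    · exact Finset.prod_congr rfl fun j hj => by
        simp [Matrix.updateCol_apply, (Finset.mem_erase.mp hj).1]
  have key : ∀ i : Fin n, (Matrix.adjugate (Y z) * Y') i i
      = ∑ σ : Equiv.Perm (Fin n), ((Equiv.Perm.sign σ : ℤ) : ℂ) *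
          ((∏ j ∈ Finset.univ.erase i, Y z (σ j) j) * Y' (σ i) i) := by
    intro i
    have h1 : (Matrix.adjugate (Y z) * Y') i i
        = (Matrix.adjugate (Y z) *ᵥ (fun k => Y' k i)) i := by
      simp [Matrix.mul_apply, Matrix.mulVec, dotProduct]
    rw [h1, ← Matrix.cramer_eq_adjugate_mulVec, Matrix.cramer_apply, Matrix.det_apply']
    refine Finset.sum_congr rfl fun σ _ => ?_
    rw [hprod σ i (fun k => Y' k i)]
    ring
  calc (Matrix.adjugate (Y z) * Y').trace
      = ∑ i, (Matrix.adjugate (Y z) * Y') i i := by simp [Matrix.trace, Matrix.diag]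
    _ = ∑ i, ∑ σ : Equiv.Perm (Fin n), ((Equiv.Perm.sign σ : ℤ) : ℂ) *
          ((∏ j ∈ Finset.univ.erase i, Y z (σ j) j) * Y' (σ i) i) :=
        Finset.sum_congr rfl fun i _ => key i
    _ = ∑ σ : Equiv.Perm (Fin n), ((Equiv.Perm.sign σ : ℤ) : ℂ) *
          ∑ i, (∏ j ∈ Finset.univ.erase i, Y z (σ j) j) • Y' (σ i) i := by
        rw [Finset.sum_comm]
        refine Finset.sum_congr rfl fun σ _ => ?_
        rw [Finset.mul_sum]
        exact Finset.sum_congr rfl fun i _ => by rw [smul_eq_mul]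


/-- For a solution `Y` of the linear system `Y' = A(z)Y` on
an open connected set `U` (derivatives taken entrywise), if `det Y(z₀) ≠ 0` for
some `z₀ ∈ U`, then `det Y(z) ≠ 0` for every `z ∈ U`. -/
theorem stmt17 (n : ℕ) (hn : 1 ≤ n) (U : Set ℂ) (hU : IsOpen U) (hUc : IsConnected U)
    (A Y : ℂ → Matrix (Fin n) (Fin n) ℂ)
    (hA : ∀ z ∈ U, ∀ i j, DifferentiableAt ℂ (fun w => A w i j) z)
    (hY : ∀ z ∈ U, ∀ i j, HasDerivAt (fun w => Y w i j) ((A z * Y z) i j) z)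
    (z₀ : ℂ) (hz₀ : z₀ ∈ U) (hdet : (Y z₀).det ≠ 0) :
    ∀ z ∈ U, (Y z).det ≠ 0 := by
  classical
  set f : ℂ → ℂ := fun z => (Y z).det with hfdef
  have hfd : ∀ z ∈ U, HasDerivAt f ((A z).trace * f z) z := by
    intro z hz
    have h := jacobi_det Y (A z * Y z) z (fun i j => hY z hz i j)
    have heq : (Matrix.adjugate (Y z) * (A z * Y z)).trace = (A z).trace * f z := by
      rw [← Matrix.mul_assoc, Matrix.trace_mul_comm, ← Matrix.mul_assoc,
        Matrix.mul_adjugate, Matrix.smul_mul, Matrix.one_mul, Matrix.trace_smul, smul_eq_mul,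
        mul_comm]
    rwa [heq] at h
  have hdiff : DifferentiableOn ℂ f U :=
    fun z hz => ((hfd z hz).differentiableAt).differentiableWithinAt
  have han : AnalyticOnNhd ℂ f U := hdiff.analyticOnNhd hU
  intro z hz
  by_contra hfz0
  have hfz : f z = 0 := by simpa using hfz0
  have hAz : AnalyticAt ℂ f z := han z hz
  rcases em (∀ᶠ w in 𝓝 z, f w = 0) with hev | hev
  · exact hdet (han.eqOn_zero_of_preconnected_of_eventuallyEq_zero hUc.isPreconnected hz hev hz₀)
  · obtain ⟨m, g, hg_an, hg_ne, hg_eq⟩ := hAz.exists_eventuallyEq_pow_smul_nonzero_iff.mpr hev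
    have hm : m ≠ 0 := by
      intro h0
      subst h0
      have h1 := hg_eq.self_of_nhds
      simp only [sub_self, pow_zero, one_smul] at h1
      exact hg_ne (h1 ▸ hfz)
    obtain ⟨k, rfl⟩ := Nat.exists_eq_succ_of_ne_zero hm
    have hg_ev : ∀ᶠ w in 𝓝 z, AnalyticAt ℂ g w := hg_an.eventually_analyticAt
    -- key eventual identity near z
    have hkey : ∀ᶠ w in 𝓝 z, (A w).trace * ((w - z) ^ (k + 1) * g w)
        = ((k : ℂ) + 1) * (w - z) ^ k * g w + (w - z) ^ (k + 1) * deriv g w := by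
      filter_upwards [hU.mem_nhds hz, hg_eq.eventually_nhds, hg_ev] with w hwU hfw hgw
      have h1 : HasDerivAt (fun x : ℂ => (x - z) ^ (k + 1)) (((k : ℂ) + 1) * (w - z) ^ k) w := by
        have := ((hasDerivAt_id w).sub_const z).fun_pow (k + 1)
        simpa using this
      have h2 : HasDerivAt g (deriv g w) w := hgw.differentiableAt.hasDerivAt
      have h3 := h1.mul h2
      have hfw' : f =ᶠ[𝓝 w] fun x => (x - z) ^ (k + 1) * g x := by
        filter_upwards [hfw] with x hx
        simpa [smul_eq_mul] using hx
      have h4 := h3.congr_of_eventuallyEq hfw'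
      have h5 := (hfd w hwU).unique h4
      have h6 : f w = (w - z) ^ (k + 1) * g w := by
        simpa [smul_eq_mul] using hfw.self_of_nhds
      rw [← h6]; exact h5
    -- divide by (w - z)^k on the punctured neighborhood
    have hkey' : ∀ᶠ w in 𝓝[≠] z, ((k : ℂ) + 1) * g w + (w - z) * deriv g w
        = (A w).trace * ((w - z) * g w) := by
      filter_upwards [eventually_nhdsWithin_of_eventually_nhds hkey, self_mem_nhdsWithin]
        with w hw hwz
      have hwz' : (w - z) ≠ 0 := sub_ne_zero.mpr hwz
      have hpow : (w - z) ^ k ≠ 0 := pow_ne_zero _ hwz'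
      apply mul_left_cancel₀ hpow
      rw [pow_succ] at hw
      ring_nf
      ring_nf at hw
      linear_combination -hw
    -- continuity facts at z
    have htr : ContinuousAt (fun w => (A w).trace) z := by
      have h0 : ContinuousAt (fun w => ∑ i, A w i i) z :=
        tendsto_finset_sum _ fun i _ => (hA z hz i i).continuousAt
      simpa [Matrix.trace, Matrix.diag] using h0
    have hg_c : ContinuousAt g z := hg_an.continuousAt
    have hdg_c : ContinuousAt (deriv g) z := by
      have h1 : AnalyticAt ℂ (fderiv ℂ g) z := hg_an.fderiv
      have h2 : ContinuousAt (fun w => fderiv ℂ g w 1) z := by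
        exact (ContinuousLinearMap.apply ℂ ℂ (1 : ℂ)).continuous.continuousAt.comp h1.continuousAt
      have h3 : (fun w => fderiv ℂ g w 1) = deriv g := by
        funext w; exact fderiv_apply_one_eq_deriv
      rwa [h3] at h2
    have t1 : Tendsto (fun w => ((k : ℂ) + 1) * g w + (w - z) * deriv g w) (𝓝[≠] z)
        (𝓝 (((k : ℂ) + 1) * g z)) := by
      have : Tendsto (fun w => ((k : ℂ) + 1) * g w + (w - z) * deriv g w) (𝓝 z)
          (𝓝 (((k : ℂ) + 1) * g z + (z - z) * deriv g z)) :=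
        ((continuousAt_const.mul hg_c).add
          (((continuousAt_id.sub continuousAt_const)).mul hdg_c))
      simpa using this.mono_left nhdsWithin_le_nhds
    have t2 : Tendsto (fun w => (A w).trace * ((w - z) * g w)) (𝓝[≠] z) (𝓝 0) := by
      have h0 : Tendsto (fun w => (A w).trace * ((w - z) * g w)) (𝓝 z)
          (𝓝 ((A z).trace * ((z - z) * g z))) :=
        htr.mul ((continuousAt_id.sub continuousAt_const).mul hg_c)
      simpa using h0.mono_left nhdsWithin_le_nhds
    have hzero : ((k : ℂ) + 1) * g z = 0 :=
      tendsto_nhds_unique (Filter.Tendsto.congr' hkey' t1) t2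
    have : g z = 0 := by
      have hk1 : ((k : ℂ) + 1) ≠ 0 := Nat.cast_add_one_ne_zero k
      exact (mul_eq_zero.mp hzero).resolve_left hk1
    exact hg_ne this
end
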